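/- arXiv:2501.14450 — 7 statements merged into one kernel-verified Lean document; each statement's English description precedes it below -/
import Mathlib

section
/- Let G be an even-hole-free graph and I, J two independent sets of G of equal size. Then I and J are reconfigurable under the token sliding rule TS (a sequence of independent sets where consecutive sets differ by sliding one token along an edge) if and only if I and J are reconfigurable under the k-token-sliding rule k-TS (a sequence of independent sets where in each step at most k tokens each slide along an edge simultaneously), for any positive integer k. -/
def IsIndep {V : Type*} (G : SimpleGraph V) (s : Finset V) : Prop :=
  ∀ ⦃a⦄, a ∈ s → ∀ ⦃b⦄, b ∈ s → ¬ G.Adj a b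

def HasInducedCycle {V : Type*} (G : SimpleGraph V) (n : ℕ) : Prop :=
  ∃ f : ZMod n → V, Function.Injective f ∧
    ∀ i j : ZMod n, G.Adj (f i) (f j) ↔ (j = i + 1 ∨ i = j + 1)

def EvenHoleFree {V : Type*} (G : SimpleGraph V) : Prop :=
  ¬ ∃ n : ℕ, 4 ≤ n ∧ Even n ∧ HasInducedCycle G n

/-- One token-sliding step between independent sets: one token slides along an edge. -/
def TSStep {V : Type*} [DecidableEq V] (G : SimpleGraph V) (S S' : Finset V) : Prop :=
  IsIndep G S ∧ IsIndep G S' ∧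
    ∃ u v, u ∈ S ∧ v ∉ S ∧ G.Adj u v ∧ S' = insert v (S.erase u)

/-- One `k`-token-sliding step between independent sets: at most `k` tokens each slide
along an edge simultaneously (a perfect matching between `S \ S'` and `S' \ S` in `G`). -/
def KTSStep {V : Type*} [DecidableEq V] (G : SimpleGraph V) (k : ℕ) (S S' : Finset V) : Prop :=
  IsIndep G S ∧ IsIndep G S' ∧ (S \ S').card ≤ k ∧ (S' \ S).card ≤ k ∧
    ∃ f : V → V, Set.BijOn f ↑(S \ S') ↑(S' \ S) ∧ ∀ u ∈ S \ S', G.Adj u (f u)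

/-- An alternating closed structure witnessing a closed "bad" configuration. -/
def BadCycle {V : Type*} (G : SimpleGraph V) (m : ℕ) : Prop :=
  ∃ a b : ZMod m → V, Function.Injective a ∧ Function.Injective b ∧
    (∀ i j, a i ≠ b j) ∧ (∀ i j, ¬ G.Adj (a i) (a j)) ∧ (∀ i j, ¬ G.Adj (b i) (b j)) ∧
    (∀ i, G.Adj (a i) (b i)) ∧ (∀ i, G.Adj (a (i+1)) (b i))

section Aux
variable {V : Type*} {G : SimpleGraph V}

lemma zmod_cast_val {m : ℕ} [NeZero m] (x : ZMod m) : ((x.val : ℕ) : ZMod m) = x := by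
  simp [ZMod.natCast_val, ZMod.cast_id]

/-- A chord in a bad cycle yields a strictly smaller bad cycle. -/
lemma badCycle_smaller {m : ℕ} (hm : 2 ≤ m)
    (a b : ZMod m → V) (ha : Function.Injective a) (hb : Function.Injective b)
    (hab : ∀ i j, a i ≠ b j) (haa : ∀ i j, ¬ G.Adj (a i) (a j))
    (hbb : ∀ i j, ¬ G.Adj (b i) (b j))
    (h1 : ∀ i, G.Adj (a i) (b i)) (h2 : ∀ i, G.Adj (a (i+1)) (b i))
    {i j : ZMod m} (hadj : G.Adj (a i) (b j)) (hji : j ≠ i) (hij : i ≠ j + 1) :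
    ∃ m', 2 ≤ m' ∧ m' < m ∧ BadCycle G m' := by
  haveI : NeZero m := ⟨by omega⟩
  set d := (i - j).val with hd
  have hvd : ((d : ℕ) : ZMod m) = i - j := zmod_cast_val _
  have hdm : d < m := ZMod.val_lt _
  have hd0 : d ≠ 0 := by
    intro h
    rw [h] at hvd; push_cast at hvd
    exact hji (sub_eq_zero.mp hvd.symm).symm
  have hd1 : d ≠ 1 := by
    intro h
    rw [h] at hvd; push_cast at hvd
    exact hij (by rw [← hvd.symm]; ring)
  have hd2 : 2 ≤ d := by omega
  haveI : NeZero d := ⟨by omega⟩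
  haveI : Fact (1 < d) := ⟨by omega⟩
  haveI : Fact (1 < m) := ⟨by omega⟩
  -- index helpers
  have hcast : ∀ t : ZMod d, ((t.val : ℕ) : ZMod m).val = t.val :=
    fun t => ZMod.val_cast_of_lt (lt_trans (ZMod.val_lt t) hdm)
  have hidx : ∀ t s : ZMod d, ((t.val : ℕ) : ZMod m) = ((s.val : ℕ) : ZMod m) → t = s := by
    intro t s h
    have := congrArg ZMod.val h
    rw [hcast, hcast] at this
    exact ZMod.val_injective d this
  have hsucc : ∀ t : ZMod d, t.val ≠ d - 1 → (t + 1).val = t.val + 1 := by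
    intro t ht
    have h1' : (1 : ZMod d).val = 1 := ZMod.val_one d
    have := ZMod.val_add t 1
    rw [h1'] at this
    rw [this, Nat.mod_eq_of_lt (by have := ZMod.val_lt t; omega)]
  have hwrap : ∀ t : ZMod d, t.val = d - 1 → (t + 1).val = 0 := by
    intro t ht
    have h1' : (1 : ZMod d).val = 1 := ZMod.val_one d
    have := ZMod.val_add t 1
    rw [h1', ht] at this
    rw [this, Nat.sub_add_cancel (by omega), Nat.mod_self]
  have hlast : ((d - 1 : ℕ) : ZMod m) = i - j - 1 := by
    have h' : ((1 + (d - 1) : ℕ) : ZMod m) = ((d : ℕ) : ZMod m) := by congr 1; omega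
    push_cast at h'
    linear_combination h' + hvd
  have hlasteq : ∀ t : ZMod d, t.val = d - 1 → j + 1 + ((t.val : ℕ) : ZMod m) = i := by
    intro t ht; rw [ht, hlast]; ring
  -- the smaller structures
  refine ⟨d, hd2, hdm, fun t => a (j + 1 + ((t.val : ℕ) : ZMod m)),
    fun t => if t.val = d - 1 then b j else b (j + 1 + ((t.val : ℕ) : ZMod m)), ?_, ?_, ?_, ?_, ?_, ?_, ?_⟩
  · -- injectivity of a'
    intro t s h
    have h' := ha h
    exact hidx t s (by linear_combination h')
  · -- injectivity of b'
    intro t s h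
    dsimp only at h
    by_cases ht : t.val = d - 1 <;> by_cases hs : s.val = d - 1
    · exact ZMod.val_injective d (ht.trans hs.symm)
    · rw [if_pos ht, if_neg hs] at h
      have h' := hb h
      have hz : ((1 + s.val : ℕ) : ZMod m) = 0 := by push_cast; linear_combination -h'
      have := congrArg ZMod.val hz
      rw [ZMod.val_cast_of_lt (by have := ZMod.val_lt s; omega), ZMod.val_zero] at this
      omega
    · rw [if_neg ht, if_pos hs] at h
      have h' := hb h
      have hz : ((1 + t.val : ℕ) : ZMod m) = 0 := by push_cast; linear_combination h'
      have := congrArg ZMod.val hz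
      rw [ZMod.val_cast_of_lt (by have := ZMod.val_lt t; omega), ZMod.val_zero] at this
      omega
    · rw [if_neg ht, if_neg hs] at h
      have h' := hb h
      exact hidx t s (by linear_combination h')
  · -- a' ≠ b'
    intro t s
    dsimp only
    split_ifs <;> exact hab _ _
  · intro t s; exact haa _ _
  · intro t s; dsimp only; split_ifs <;> exact hbb _ _
  · -- Adj (a' t) (b' t)
    intro t
    dsimp only
    by_cases ht : t.val = d - 1
    · rw [if_pos ht, hlasteq t ht]; exact hadj
    · rw [if_neg ht]; exact h1 _
  · -- Adj (a' (t+1)) (b' t)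
    intro t
    dsimp only
    by_cases ht : t.val = d - 1
    · rw [if_pos ht]
      have hv0 : (t + 1).val = 0 := hwrap t ht
      have he : j + 1 + (((t + 1).val : ℕ) : ZMod m) = j + 1 := by rw [hv0]; push_cast; ring
      rw [he]; exact h2 j
    · rw [if_neg ht]
      have hv : (t + 1).val = t.val + 1 := hsucc t ht
      have he : j + 1 + (((t + 1).val : ℕ) : ZMod m) = (j + 1 + ((t.val : ℕ) : ZMod m)) + 1 := by
        rw [hv]; push_cast; ring
      rw [he]; exact h2 _

end Aux

section Aux2
variable {V : Type*} {G : SimpleGraph V}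

lemma not_badCycle (hG : EvenHoleFree G) : ∀ m, 2 ≤ m → ¬ BadCycle G m := by
  intro m
  induction m using Nat.strong_induction_on with
  | _ m ih =>
    intro hm hbad
    obtain ⟨a, b, ha, hb, hab, haa, hbb, h1, h2⟩ := hbad
    haveI : NeZero m := ⟨by omega⟩
    have hcf : ∀ i j, G.Adj (a i) (b j) → j = i ∨ i = j + 1 := by
      intro i j hadj
      by_contra hc
      push_neg at hc
      obtain ⟨m', h2m', hm'm, hbad'⟩ :=
        badCycle_smaller hm a b ha hb hab haa hbb h1 h2 hadj hc.1 hc.2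
      exact ih m' hm'm h2m' hbad'
    apply hG
    refine ⟨2 * m, by omega, ⟨m, by ring⟩, ?_⟩
    haveI : NeZero (2 * m) := ⟨by omega⟩
    haveI : Fact (1 < m) := ⟨by omega⟩
    haveI : Fact (1 < 2 * m) := ⟨by omega⟩
    have hvlt : ∀ i : ZMod (2 * m), i.val < 2 * m := fun i => ZMod.val_lt i
    have hsucc2 : ∀ i : ZMod (2 * m), (i + 1).val = (i.val + 1) % (2 * m) := by
      intro i
      have h1' : (1 : ZMod (2 * m)).val = 1 := ZMod.val_one _
      have := ZMod.val_add i 1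
      rw [h1'] at this
      exact this
    have hvm : ∀ x : ℕ, x < m → ((x : ZMod m)).val = x := fun x hx => ZMod.val_cast_of_lt hx
    refine ⟨fun i => if i.val % 2 = 0 then a ((i.val / 2 : ℕ) : ZMod m)
      else b ((i.val / 2 : ℕ) : ZMod m), ?_, ?_⟩
    · -- injectivity
      intro x y h
      dsimp only at h
      by_cases px : x.val % 2 = 0 <;> by_cases py : y.val % 2 = 0
      · rw [if_pos px, if_pos py] at h
        have h' := congrArg ZMod.val (ha h)
        rw [hvm _ (by have := hvlt x; have := hvlt y; omega), hvm _ (by have := hvlt x; have := hvlt y; omega)] at h'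
        exact ZMod.val_injective _ (by omega)
      · rw [if_pos px, if_neg py] at h
        exact absurd h (hab _ _)
      · rw [if_neg px, if_pos py] at h
        exact absurd h.symm (hab _ _)
      · rw [if_neg px, if_neg py] at h
        have h' := congrArg ZMod.val (hb h)
        rw [hvm _ (by have := hvlt x; have := hvlt y; omega), hvm _ (by have := hvlt x; have := hvlt y; omega)] at h'
        exact ZMod.val_injective _ (by omega)
    · -- adjacency iff
      have hmain : ∀ x y : ZMod (2 * m), x.val % 2 = 0 → y.val % 2 = 1 →
          G.Adj (a ((x.val / 2 : ℕ) : ZMod m)) (b ((y.val / 2 : ℕ) : ZMod m)) →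
          y = x + 1 ∨ x = y + 1 := by
        intro x y px py hadj
        rcases hcf _ _ hadj with hq | hq
        · -- y.val/2 = x.val/2
          have h' := congrArg ZMod.val hq
          rw [hvm _ (by have := hvlt x; have := hvlt y; omega), hvm _ (by have := hvlt x; have := hvlt y; omega)] at h'
          left
          apply ZMod.val_injective
          rw [hsucc2, Nat.mod_eq_of_lt (by have := hvlt x; omega)]
          have := hvlt x; have := hvlt y; omega
        · -- x.val/2 = y.val/2 + 1 (mod m)
          have h' := congrArg ZMod.val hq
          have hvy : ((y.val / 2 : ℕ) : ZMod m).val = y.val / 2 := hvm _ (by have := hvlt y; omega)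
          rw [hvm _ (by have := hvlt x; omega)] at h'
          have hadd := ZMod.val_add ((y.val / 2 : ℕ) : ZMod m) 1
          rw [ZMod.val_one _, hvy] at hadd
          rw [hadd] at h'
          right
          apply ZMod.val_injective
          rw [hsucc2]
          by_cases hcase : y.val / 2 + 1 < m
          · rw [Nat.mod_eq_of_lt hcase] at h'
            rw [Nat.mod_eq_of_lt (by have := hvlt x; have := hvlt y; omega)]
            have := hvlt x; have := hvlt y; omega
          · have hy2 : y.val / 2 + 1 = m := by have := hvlt y; omega
            rw [hy2, Nat.mod_self] at h'
            have hyv : y.val + 1 = 2 * m := by have := hvlt y; omega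
            rw [hyv, Nat.mod_self]
            have := hvlt x; omega
      have hcons : ∀ x : ZMod (2 * m),
          G.Adj ((fun i => if i.val % 2 = 0 then a ((i.val / 2 : ℕ) : ZMod m)
            else b ((i.val / 2 : ℕ) : ZMod m)) x)
          ((fun i => if i.val % 2 = 0 then a ((i.val / 2 : ℕ) : ZMod m)
            else b ((i.val / 2 : ℕ) : ZMod m)) (x + 1)) := by
        intro x
        dsimp only
        by_cases hv : x.val = 2 * m - 1
        · have hx1 : (x + 1).val = 0 := by
            rw [hsucc2, hv, show 2 * m - 1 + 1 = 2 * m by omega, Nat.mod_self]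
          have hodd : ¬ (x.val % 2 = 0) := by omega
          rw [if_neg hodd, hx1]
          norm_num
          have hcast0 : ((m - 1 : ℕ) : ZMod m) + 1 = (0 : ZMod m) := by
            have h' := congrArg (Nat.cast : ℕ → ZMod m) (show (m - 1) + 1 = m by omega)
            push_cast at h'
            rw [ZMod.natCast_self] at h'
            simpa using h'
          have := h2 ((m - 1 : ℕ) : ZMod m)
          rw [hcast0] at this
          rw [hv, show (2 * m - 1) / 2 = m - 1 by omega]
          exact this.symm
        · have hx1 : (x + 1).val = x.val + 1 := by
            rw [hsucc2, Nat.mod_eq_of_lt (by have := hvlt x; omega)]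
          by_cases pv : x.val % 2 = 0
          · have hodd : ¬ ((x + 1).val % 2 = 0) := by rw [hx1]; omega
            rw [if_pos pv, if_neg hodd, hx1, show (x.val + 1) / 2 = x.val / 2 by omega]
            exact h1 _
          · have heven : (x + 1).val % 2 = 0 := by rw [hx1]; omega
            rw [if_neg pv, if_pos heven, hx1, show (x.val + 1) / 2 = x.val / 2 + 1 by omega]
            have hcast1 : ((x.val / 2 + 1 : ℕ) : ZMod m) = ((x.val / 2 : ℕ) : ZMod m) + 1 := by
              push_cast; ring
            rw [hcast1]
            exact (h2 _).symm
      intro x y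
      constructor
      · intro hadj
        dsimp only at hadj
        by_cases px : x.val % 2 = 0 <;> by_cases py : y.val % 2 = 0
        · rw [if_pos px, if_pos py] at hadj
          exact absurd hadj (haa _ _)
        · rw [if_pos px, if_neg py] at hadj
          exact hmain x y px (by omega) hadj
        · rw [if_neg px, if_pos py] at hadj
          exact (hmain y x py (by omega) hadj.symm).symm
        · rw [if_neg px, if_neg py] at hadj
          exact absurd hadj (hbb _ _)
      · intro h
        rcases h with h | h
        · rw [h]; exact hcons x
        · rw [h]; exact (hcons y).symm

end Aux2

section Aux3
variable {V : Type*} [DecidableEq V] {G : SimpleGraph V}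

lemma exists_free_token (hG : EvenHoleFree G) {S S' : Finset V}
    (hS : IsIndep G S) (hS' : IsIndep G S') (f : V → V)
    (hbij : Set.BijOn f ↑(S \ S') ↑(S' \ S)) (hf : ∀ u ∈ S \ S', G.Adj u (f u))
    (hne : (S \ S').Nonempty) :
    ∃ u ∈ S \ S', ∀ w ∈ S \ S', G.Adj w (f u) → w = u := by
  by_contra hcon
  push_neg at hcon
  obtain ⟨u0, hu0⟩ := hne
  have hch : ∀ u : V, ∃ w : V, u ∈ S \ S' → (w ∈ S \ S' ∧ G.Adj w (f u) ∧ w ≠ u) := by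
    intro u
    by_cases hu : u ∈ S \ S'
    · obtain ⟨w, hw1, hw2, hw3⟩ := hcon u hu
      exact ⟨w, fun _ => ⟨hw1, hw2, hw3⟩⟩
    · exact ⟨u, fun h => absurd h hu⟩
  choose g hg using hch
  have horb : ∀ n : ℕ, g^[n] u0 ∈ S \ S' := by
    intro n
    induction n with
    | zero => simpa using hu0
    | succ n ihn => rw [Function.iterate_succ_apply']; exact (hg _ ihn).1
  obtain ⟨i, hi, j, hj, hij, hgij⟩ :=
    Finset.exists_ne_map_eq_of_card_lt_of_maps_to
      (s := Finset.range ((S \ S').card + 1)) (t := S \ S')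
      (by simp) (fun n _ => horb n)
  have hper : ∃ i' j' : ℕ, i' < j' ∧ g^[i'] u0 = g^[j'] u0 := by
    rcases lt_or_gt_of_ne hij with h | h
    · exact ⟨i, j, h, hgij⟩
    · exact ⟨j, i, h, hgij.symm⟩
  clear hij hgij hi hj
  obtain ⟨i, j, hlt, hgij⟩ := hper
  set x := g^[i] u0 with hx
  have hper0 : ∃ p, 0 < p ∧ g^[p] x = x := by
    refine ⟨j - i, by omega, ?_⟩
    rw [hx, ← Function.iterate_add_apply, show j - i + i = j by omega]
    exact hgij.symm
  set p := Nat.find hper0 with hp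
  obtain ⟨hppos, hpx⟩ := Nat.find_spec hper0
  rw [← hp] at hppos hpx
  have hxorb : ∀ n : ℕ, g^[n] x ∈ S \ S' := fun n => by
    rw [hx, ← Function.iterate_add_apply]; exact horb _
  have hxA : x ∈ S \ S' := by simpa using hxorb 0
  have hp2 : 2 ≤ p := by
    rcases Nat.lt_or_ge p 2 with h | h
    · have hp1 : p = 1 := by omega
      rw [hp1] at hpx
      simp at hpx
      exact ((hg x hxA).2.2 hpx).elim
    · exact h
  haveI : NeZero p := ⟨by omega⟩
  haveI : Fact (1 < p) := ⟨by omega⟩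
  have hmin : ∀ q, 0 < q → q < p → g^[q] x ≠ x := by
    intro q hq hqp hgq
    exact Nat.find_min hper0 hqp ⟨hq, hgq⟩
  have hinj : ∀ s t : ℕ, s < p → t < p → g^[s] x = g^[t] x → s = t := by
    have main : ∀ s t : ℕ, s < t → t < p → g^[s] x ≠ g^[t] x := by
      intro s t hst' htp heq
      have hcyc : g^[p - t + s] x = x := by
        calc g^[p - t + s] x = g^[p - t] (g^[s] x) := by rw [Function.iterate_add_apply]
        _ = g^[p - t] (g^[t] x) := by rw [heq]
        _ = g^[p - t + t] x := (Function.iterate_add_apply _ _ _ _).symm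
        _ = x := by rw [show p - t + t = p by omega]; exact hpx
      exact hmin _ (by omega) (by omega) hcyc
    intro s t hs ht hst
    by_contra hne'
    rcases lt_or_gt_of_ne hne' with h | h
    · exact main s t h ht hst
    · exact main t s h hs hst.symm
  have hstep : ∀ t : ZMod p, g^[(t + 1).val] x = g (g^[t.val] x) := by
    intro t
    have hv := ZMod.val_add t 1
    rw [ZMod.val_one] at hv
    by_cases ht : t.val = p - 1
    · rw [hv, ht, show p - 1 + 1 = p by omega, Nat.mod_self]
      have heq : g^[p] x = g (g^[p - 1] x) := by
        conv_lhs => rw [show p = (p - 1) + 1 by omega]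
        rw [Function.iterate_succ_apply']
      rw [← heq, hpx]
      rfl
    · rw [hv, Nat.mod_eq_of_lt (by have := ZMod.val_lt t; omega),
        Function.iterate_succ_apply']
  apply not_badCycle hG p hp2
  refine ⟨fun t => g^[t.val] x, fun t => f (g^[t.val] x), ?_, ?_, ?_, ?_, ?_, ?_, ?_⟩
  · intro t s h
    exact ZMod.val_injective p (hinj _ _ (ZMod.val_lt t) (ZMod.val_lt s) h)
  · intro t s h
    have h' := hbij.injOn (Finset.mem_coe.mpr (hxorb t.val)) (Finset.mem_coe.mpr (hxorb s.val)) h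
    exact ZMod.val_injective p (hinj _ _ (ZMod.val_lt t) (ZMod.val_lt s) h')
  · intro t s h
    have h1' := hxorb t.val
    have h2' : f (g^[s.val] x) ∈ S' \ S :=
      Finset.mem_coe.mp (hbij.mapsTo (Finset.mem_coe.mpr (hxorb s.val)))
    rw [Finset.mem_sdiff] at h1' h2'
    have h'' : g^[t.val] x = f (g^[s.val] x) := h
    rw [h''] at h1'
    exact h1'.2 h2'.1
  · intro t s
    have h1' := (Finset.mem_sdiff.mp (hxorb t.val)).1
    have h2' := (Finset.mem_sdiff.mp (hxorb s.val)).1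
    exact hS h1' h2'
  · intro t s
    have h1' : f (g^[t.val] x) ∈ S' \ S :=
      Finset.mem_coe.mp (hbij.mapsTo (Finset.mem_coe.mpr (hxorb t.val)))
    have h2' : f (g^[s.val] x) ∈ S' \ S :=
      Finset.mem_coe.mp (hbij.mapsTo (Finset.mem_coe.mpr (hxorb s.val)))
    exact hS' (Finset.mem_sdiff.mp h1').1 (Finset.mem_sdiff.mp h2').1
  · intro t
    exact hf _ (hxorb t.val)
  · intro t
    show G.Adj (g^[(t + 1).val] x) (f (g^[t.val] x))
    rw [hstep]
    exact (hg _ (hxorb t.val)).2.1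

lemma kts_to_ts_aux (hG : EvenHoleFree G) (k : ℕ) :
    ∀ n (S S' : Finset V), (S \ S').card = n → KTSStep G k S S' →
      Relation.ReflTransGen (TSStep G) S S' := by
  intro n
  induction n using Nat.strong_induction_on with
  | _ n ih =>
    rintro S S' hn ⟨hS, hS', hk1, hk2, f, hbij, hf⟩
    rcases Nat.eq_zero_or_pos n with h0 | hpos
    · have hA : S \ S' = ∅ := Finset.card_eq_zero.mp (by omega)
      have hB : S' \ S = ∅ := by
        have hsub := hbij.surjOn
        rw [hA] at hsub
        have hsub2 : (↑(S' \ S) : Set V) ⊆ f '' (↑(∅ : Finset V)) := hsub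
        simp only [Finset.coe_empty, Set.image_empty, Set.subset_empty_iff,
          Finset.coe_eq_empty] at hsub2
        exact hsub2
      have hSS : S = S' :=
        Finset.Subset.antisymm (Finset.sdiff_eq_empty_iff_subset.mp hA)
          (Finset.sdiff_eq_empty_iff_subset.mp hB)
      exact hSS ▸ Relation.ReflTransGen.refl
    · have hne : (S \ S').Nonempty := Finset.card_pos.mp (by omega)
      obtain ⟨u, hu, hufree⟩ := exists_free_token hG hS hS' f hbij hf hne
      have huS : u ∈ S := (Finset.mem_sdiff.mp hu).1
      have huS' : u ∉ S' := (Finset.mem_sdiff.mp hu).2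
      have hvB : f u ∈ S' \ S := Finset.mem_coe.mp (hbij.mapsTo (Finset.mem_coe.mpr hu))
      have hvS' : f u ∈ S' := (Finset.mem_sdiff.mp hvB).1
      have hvS : f u ∉ S := (Finset.mem_sdiff.mp hvB).2
      set S1 : Finset V := insert (f u) (S.erase u) with hS1def
      have hS1ind : IsIndep G S1 := by
        intro x hx y hy hadj
        rw [hS1def, Finset.mem_insert] at hx hy
        rcases hx with hx | hx <;> rcases hy with hy | hy
        · subst hx; subst hy; exact G.irrefl hadj
        · subst hx
          have hyS : y ∈ S := Finset.mem_of_mem_erase hy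
          have hyu : y ≠ u := Finset.ne_of_mem_erase hy
          by_cases hyS' : y ∈ S'
          · exact hS' hvS' hyS' hadj
          · exact hyu (hufree y (Finset.mem_sdiff.mpr ⟨hyS, hyS'⟩) hadj.symm)
        · subst hy
          have hxS : x ∈ S := Finset.mem_of_mem_erase hx
          have hxu : x ≠ u := Finset.ne_of_mem_erase hx
          by_cases hxS' : x ∈ S'
          · exact hS' hxS' hvS' hadj
          · exact hxu (hufree x (Finset.mem_sdiff.mpr ⟨hxS, hxS'⟩) hadj)
        · exact hS (Finset.mem_of_mem_erase hx) (Finset.mem_of_mem_erase hy) hadj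
      have hTS : TSStep G S S1 := ⟨hS, hS1ind, u, f u, huS, hvS, hf u hu, rfl⟩
      have hA1 : S1 \ S' = (S \ S').erase u := by
        ext x
        simp only [hS1def, Finset.mem_sdiff, Finset.mem_erase, Finset.mem_insert,
          Finset.mem_sdiff]
        constructor
        · rintro ⟨hx | ⟨hxu, hxS⟩, hxS'⟩
          · exact absurd (hx ▸ hvS') hxS'
          · exact ⟨hxu, hxS, hxS'⟩
        · rintro ⟨hxu, hxS, hxS'⟩
          exact ⟨Or.inr ⟨hxu, hxS⟩, hxS'⟩
      have hB1 : S' \ S1 = (S' \ S).erase (f u) := by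
        ext x
        simp only [hS1def, Finset.mem_sdiff, Finset.mem_erase, Finset.mem_insert,
          Finset.mem_sdiff]
        constructor
        · rintro ⟨hxS', hx⟩
          push_neg at hx
          refine ⟨hx.1, hxS', fun hxS => ?_⟩
          by_cases hxu : x = u
          · exact huS' (hxu ▸ hxS')
          · exact (hx.2 hxu) hxS
        · rintro ⟨hxv, hxS', hxS⟩
          exact ⟨hxS', by push_neg; exact ⟨hxv, fun _ => fun h => hxS h⟩⟩
      have hbij1 : Set.BijOn f ↑(S1 \ S') ↑(S' \ S1) := by
        rw [hA1, hB1, Finset.coe_erase, Finset.coe_erase]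
        refine ⟨?_, ?_, ?_⟩
        · rintro w ⟨hw, hwu⟩
          refine ⟨hbij.mapsTo hw, fun hwv => ?_⟩
          exact hwu (hbij.injOn hw (Finset.mem_coe.mpr hu) hwv)
        · exact hbij.injOn.mono Set.diff_subset
        · rintro y ⟨hy, hyv⟩
          obtain ⟨w, hw, hwy⟩ := hbij.surjOn hy
          refine ⟨w, ⟨hw, fun hwu => ?_⟩, hwy⟩
          exact hyv (by rw [← hwy, hwu]; exact rfl)
      have hcard1 : (S1 \ S').card = n - 1 := by
        rw [hA1, Finset.card_erase_of_mem hu, hn]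
      have hKTS1 : KTSStep G k S1 S' := by
        refine ⟨hS1ind, hS', ?_, ?_, f, hbij1, ?_⟩
        · omega
        · rw [hB1, Finset.card_erase_of_mem hvB]; omega
        · intro w hw
          rw [hA1] at hw
          exact hf w (Finset.mem_of_mem_erase hw)
      exact Relation.ReflTransGen.head hTS
        (ih (n - 1) (by omega) S1 S' hcard1 hKTS1)

end Aux3

section Aux4
variable {V : Type*} [DecidableEq V] {G : SimpleGraph V}

lemma ts_step_to_kts {k : ℕ} (hk : 1 ≤ k) {S S' : Finset V} (h : TSStep G S S') :
    KTSStep G k S S' := by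
  obtain ⟨hS, hS', u, v, huS, hvS, hadj, rfl⟩ := h
  have hne : u ≠ v := G.ne_of_adj hadj
  have hA : S \ insert v (S.erase u) = {u} := by
    ext x
    simp only [Finset.mem_sdiff, Finset.mem_insert, Finset.mem_erase, Finset.mem_singleton]
    constructor
    · rintro ⟨hxS, hx⟩
      push_neg at hx
      by_contra hxu
      exact (hx.2 hxu) hxS
    · rintro rfl
      exact ⟨huS, by push_neg; exact ⟨hne, fun h' => absurd rfl h'⟩⟩
  have hB : insert v (S.erase u) \ S = {v} := by
    ext x
    simp only [Finset.mem_sdiff, Finset.mem_insert, Finset.mem_erase, Finset.mem_singleton]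
    constructor
    · rintro ⟨hv | ⟨_, hxS⟩, hxS'⟩
      · exact hv
      · exact absurd hxS hxS'
    · rintro rfl
      exact ⟨Or.inl rfl, hvS⟩
  refine ⟨hS, hS', ?_, ?_, fun _ => v, ?_, ?_⟩
  · rw [hA]; simpa using hk
  · rw [hB]; simpa using hk
  · rw [hA, hB]
    simp only [Finset.coe_singleton]
    exact Set.bijOn_singleton.mpr rfl
  · intro w hw
    rw [hA, Finset.mem_singleton] at hw
    subst hw
    exact hadj

end Aux4

theorem stmt_2 {V : Type*} [DecidableEq V] (G : SimpleGraph V)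
    (hG : EvenHoleFree G)
    (I J : Finset V) (hI : IsIndep G I) (hJ : IsIndep G J) (hcard : I.card = J.card)
    (k : ℕ) (hk : 1 ≤ k) :
    Relation.ReflTransGen (TSStep G) I J ↔ Relation.ReflTransGen (KTSStep G k) I J := by
  constructor
  · intro h
    exact Relation.ReflTransGen.mono (fun _ _ hss => ts_step_to_kts hk hss) I J h
  · intro h
    clear hI hJ hcard
    induction h with
    | refl => exact Relation.ReflTransGen.refl
    | tail _ hstep ihp =>
      exact ihp.trans (kts_to_ts_aux hG k _ _ _ rfl hstep)
end

section
/- Let G be a graph with a clique cutset K (a clique K such that G − K is disconnected), and let X be a connected component of G − K. If the induced subgraphs G[V(X) ∪ K] and G − V(X) are both perfect graphs, then G is a perfect graph. -/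
def OddHoleFree {V : Type*} (G : SimpleGraph V) : Prop :=
  ¬ ∃ n : ℕ, 5 ≤ n ∧ Odd n ∧ HasInducedCycle G n

def IsPerfect {V : Type*} (G : SimpleGraph V) : Prop :=
  OddHoleFree G ∧ OddHoleFree Gᶜ

private lemma castEq {n : ℕ} (hn : 0 < n) {a b : ℕ} (ha : a < n) (hb : b < n)
    (h : (a : ZMod n) = b) : a = b := by
  haveI : NeZero n := ⟨by omega⟩
  have := congrArg ZMod.val h
  rwa [ZMod.val_cast_of_lt ha, ZMod.val_cast_of_lt hb] at this

private lemma cycle_sep {n : ℕ} (hn : 5 ≤ n) (P S : ZMod n → Prop)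
    (hS : ∀ a b, S a → S b → a ≠ b → b = a + 1 ∨ a = b + 1)
    (hstep : ∀ i, P i → ¬ S (i + 1) → P (i + 1))
    (hstep' : ∀ i, P i → ¬ S (i - 1) → P (i - 1))
    {i0 j0 : ZMod n} (hP : P i0) (hnP : ¬ P j0) (hjS : ¬ S j0) : False := by
  haveI : NeZero n := ⟨by omega⟩
  set d := (j0 - i0).val with hd
  have hdn : d < n := ZMod.val_lt _
  have hdcast : (d : ZMod n) = j0 - i0 := ZMod.natCast_rightInverse _
  have hne : i0 ≠ j0 := fun h => hnP (h ▸ hP)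
  have hd0 : 0 < d := by
    rcases Nat.eq_zero_or_pos d with h | h
    · exfalso
      apply hne
      have : (j0 - i0) = 0 := by rw [← hdcast, h]; simp
      have := sub_eq_zero.mp this
      exact this.symm
    · exact h
  have fw : ∀ t : ℕ, (∀ s : ℕ, 1 ≤ s → s ≤ t → ¬ S (i0 + s)) → P (i0 + t) := by
    intro t
    induction t with
    | zero => intro _; simpa using hP
    | succ t ih =>
      intro h
      have hp := ih (fun s h1 h2 => h s h1 (by omega))
      have h2 := hstep _ hp (by
        have : (i0 + (t : ZMod n)) + 1 = i0 + ((t + 1 : ℕ) : ZMod n) := by push_cast; ring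
        rw [this]; exact h (t+1) (by omega) (le_refl _))
      have : (i0 + (t : ZMod n)) + 1 = i0 + ((t + 1 : ℕ) : ZMod n) := by push_cast; ring
      rwa [this] at h2
  have bw : ∀ t : ℕ, (∀ s : ℕ, 1 ≤ s → s ≤ t → ¬ S (i0 - s)) → P (i0 - t) := by
    intro t
    induction t with
    | zero => intro _; simpa using hP
    | succ t ih =>
      intro h
      have hp := ih (fun s h1 h2 => h s h1 (by omega))
      have h2 := hstep' _ hp (by
        have : (i0 - (t : ZMod n)) - 1 = i0 - ((t + 1 : ℕ) : ZMod n) := by push_cast; ring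
        rw [this]; exact h (t+1) (by omega) (le_refl _))
      have : (i0 - (t : ZMod n)) - 1 = i0 - ((t + 1 : ℕ) : ZMod n) := by push_cast; ring
      rwa [this] at h2
  have hfj : i0 + (d : ZMod n) = j0 := by rw [hdcast]; ring
  have hbj : i0 - ((n - d : ℕ) : ZMod n) = j0 := by
    have : ((n - d : ℕ) : ZMod n) = -(d : ZMod n) := by
      push_cast [Nat.cast_sub hdn.le]
      simp
    rw [this, hdcast]; ring
  -- forward blocking
  have hfb : ∃ s : ℕ, 1 ≤ s ∧ s < d ∧ S (i0 + s) := by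
    by_contra h
    push_neg at h
    apply hnP
    rw [← hfj]
    apply fw
    intro s h1 h2 hSs
    rcases Nat.lt_or_ge s d with h3 | h3
    · exact h s h1 h3 hSs
    · have : s = d := by omega
      subst this
      rw [hfj] at hSs
      exact hjS hSs
  have hbb : ∃ s : ℕ, 1 ≤ s ∧ s < n - d ∧ S (i0 - s) := by
    by_contra h
    push_neg at h
    apply hnP
    rw [← hbj]
    apply bw
    intro s h1 h2 hSs
    rcases Nat.lt_or_ge s (n - d) with h3 | h3
    · exact h s h1 h3 hSs
    · have : s = n - d := by omega
      subst this
      rw [hbj] at hSs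
      exact hjS hSs
  obtain ⟨s, hs1, hs2, hsS⟩ := hfb
  obtain ⟨u, hu1, hu2, huS⟩ := hbb
  have hsu : s + u < n := by omega
  have hab : i0 + (s : ZMod n) ≠ i0 - (u : ZMod n) := by
    intro h
    have : ((s + u : ℕ) : ZMod n) = ((0 : ℕ) : ZMod n) := by push_cast; linear_combination h
    have := castEq (by omega) hsu (by omega) this
    omega
  rcases hS _ _ hsS huS hab with h | h
  · -- i0 - u = (i0 + s) + 1
    have : ((s + 1 + u : ℕ) : ZMod n) = ((0 : ℕ) : ZMod n) := by push_cast; linear_combination -h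
    have := castEq (by omega) (by omega) (by omega) this
    omega
  · -- i0 + s = (i0 - u) + 1
    have : ((s + u : ℕ) : ZMod n) = ((1 : ℕ) : ZMod n) := by push_cast; linear_combination h
    have := castEq (by omega) hsu (by omega) this
    omega

private lemma restrict {V : Type*} {G : SimpleGraph V} {S : Set V} {n : ℕ}
    (f : ZMod n → V) (hinj : Function.Injective f) (hr : ∀ i, f i ∈ S)
    (hadj : ∀ i j, G.Adj (f i) (f j) ↔ (j = i + 1 ∨ i = j + 1)) :
    HasInducedCycle (G.induce S) n := by
  refine ⟨fun i => ⟨f i, hr i⟩, fun i j h => hinj (congrArg Subtype.val h), fun i j => ?_⟩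
  simpa using hadj i j

private lemma hic_transfer {V : Type*} {G H : SimpleGraph V}
    (h : ∀ a b, G.Adj a b ↔ H.Adj a b) {n : ℕ} :
    HasInducedCycle G n → HasInducedCycle H n :=
  fun ⟨f, h1, h2⟩ => ⟨f, h1, fun i j => ((h _ _).symm).trans (h2 i j)⟩

private lemma antihole_core {V : Type*} (G : SimpleGraph V) (K X : Set V)
    (hK : G.IsClique K)
    (hXmax : ∀ a ∈ X, ∀ b, b ∉ K → b ∉ X → ¬ G.Adj a b)
    {n : ℕ} (hn : 5 ≤ n) (f : ZMod n → V) (hinj : Function.Injective f)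
    (hadj : ∀ i j, Gᶜ.Adj (f i) (f j) ↔ (j = i + 1 ∨ i = j + 1))
    (i0 : ZMod n) (h0 : f i0 ∈ X) (h1X : f (i0 + 1) ∉ X) (h1K : f (i0 + 1) ∉ K) :
    False := by
  haveI : NeZero n := ⟨by omega⟩
  set g : ℕ → ZMod n := fun t => i0 + t with hg
  have key : ∀ a b : ℕ, a < n → b < n → (g b = g a + 1 ∨ g a = g b + 1) →
      (b = (a + 1) % n ∨ a = (b + 1) % n) := by
    intro a b ha hb h
    rcases h with h | h
    · left
      apply castEq (by omega) hb (Nat.mod_lt _ (by omega))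
      have h2 : ((b : ℕ) : ZMod n) = (((a + 1) : ℕ) : ZMod n) := by
        push_cast; simp only [hg] at h; linear_combination h
      rw [h2, ZMod.natCast_mod]
    · right
      apply castEq (by omega) ha (Nat.mod_lt _ (by omega))
      have h2 : ((a : ℕ) : ZMod n) = (((b + 1) : ℕ) : ZMod n) := by
        push_cast; simp only [hg] at h; linear_combination h
      rw [h2, ZMod.natCast_mod]
  have key2 : ∀ a b : ℕ, b = (a + 1) % n → g b = g a + 1 := by
    intro a b h
    subst h
    show i0 + (((a + 1) % n : ℕ) : ZMod n) = i0 + (a : ZMod n) + 1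
    rw [ZMod.natCast_mod]; push_cast; ring
  have consec_ne : ∀ i j : ZMod n, (j = i + 1 ∨ i = j + 1) → i ≠ j := by
    rintro i j (h | h) rfl <;>
    · have h1 : ((1 : ℕ) : ZMod n) = ((0 : ℕ) : ZMod n) := by push_cast; linear_combination -h
      have := castEq (n := n) (by omega) (by omega) (by omega) h1
      omega
  have hNAdj : ∀ i j : ZMod n, (j = i + 1 ∨ i = j + 1) → ¬ G.Adj (f i) (f j) :=
    fun i j h => ((G.compl_adj (f i) (f j)).mp ((hadj i j).mpr h)).2
  have hAdj : ∀ i j : ZMod n, i ≠ j → ¬ (j = i + 1 ∨ i = j + 1) → G.Adj (f i) (f j) := by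
    intro i j hij hc
    by_contra h
    exact hc ((hadj i j).mp ((G.compl_adj (f i) (f j)).mpr ⟨hinj.ne hij, h⟩))
  have hAB : ∀ i j : ZMod n, f i ∈ X → f j ∉ X → f j ∉ K → (j = i + 1 ∨ i = j + 1) := by
    intro i j hi hjX hjK
    by_contra hc
    have hij : i ≠ j := by rintro rfl; exact hjX hi
    exact hXmax _ hi _ hjK hjX (hAdj i j hij hc)
  have hCC : ∀ i j : ZMod n, (j = i + 1 ∨ i = j + 1) → f i ∈ K → f j ∈ K → False := by
    intro i j hc hi hj
    exact hNAdj i j hc (hK hi hj (hinj.ne (consec_ne i j hc)))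
  have cls : ∀ i : ZMod n, f i ∈ X ∨ f i ∈ K ∨ (f i ∉ X ∧ f i ∉ K) := by tauto
  have hg0 : g 0 = i0 := by simp [hg]
  have hg1 : g 1 = i0 + 1 := by simp [hg]
  have h0' : f (g 0) ∈ X := by rw [hg0]; exact h0
  have h1X' : f (g 1) ∉ X := by rw [hg1]; exact h1X
  have h1K' : f (g 1) ∉ K := by rw [hg1]; exact h1K
  -- standard consecutive pairs
  have c23 : g 3 = g 2 + 1 := key2 2 3 (by rw [Nat.mod_eq_of_lt (by omega)])
  rcases cls (g (n - 1)) with hp | hp | ⟨hpX, hpK⟩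
  · -- p ∈ X : contradiction
    have := key (n - 1) 1 (by omega) (by omega) (hAB (g (n - 1)) (g 1) hp h1X' h1K')
    have e1 : (n - 1 + 1) % n = 0 := by
      have : n - 1 + 1 = n := by omega
      rw [this, Nat.mod_self]
    have e2 : (1 + 1) % n = 2 := Nat.mod_eq_of_lt (by omega)
    omega
  · -- p ∈ K
    rcases cls (g 2) with hq | hq | ⟨hqX, hqK⟩
    · -- q ∈ X
      rcases cls (g 3) with hr | hr | ⟨hrX, hrK⟩
      · have := key 3 1 (by omega) (by omega) (hAB (g 3) (g 1) hr h1X' h1K')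
        have e1 : (3 + 1) % n = 4 := Nat.mod_eq_of_lt (by omega)
        have e2 : (1 + 1) % n = 2 := Nat.mod_eq_of_lt (by omega)
        omega
      · -- r ∈ K, p ∈ K
        by_cases hn5 : n = 5
        · subst hn5
          exact hCC (g 3) (g (5 - 1)) (Or.inl (key2 3 (5 - 1) (by norm_num))) hr hp
        · have hn6 : 6 ≤ n := by omega
          rcases cls (g 4) with hs | hs | ⟨hsX, hsK⟩
          · have := key 4 1 (by omega) (by omega) (hAB (g 4) (g 1) hs h1X' h1K')
            have e1 : (4 + 1) % n = 5 := Nat.mod_eq_of_lt (by omega)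
            have e2 : (1 + 1) % n = 2 := Nat.mod_eq_of_lt (by omega)
            omega
          · exact hCC (g 3) (g 4) (Or.inl (key2 3 4 (by rw [Nat.mod_eq_of_lt (by omega)]))) hr hs
          · have := key 2 4 (by omega) (by omega) (hAB (g 2) (g 4) hq hsX hsK)
            have e1 : (2 + 1) % n = 3 := Nat.mod_eq_of_lt (by omega)
            have e2 : (4 + 1) % n = 5 := Nat.mod_eq_of_lt (by omega)
            omega
      · have := key 0 3 (by omega) (by omega) (hAB (g 0) (g 3) h0' hrX hrK)
        have e1 : (0 + 1) % n = 1 := Nat.mod_eq_of_lt (by omega)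
        have e2 : (3 + 1) % n = 4 := Nat.mod_eq_of_lt (by omega)
        omega
    · -- q ∈ K
      rcases cls (g 3) with hr | hr | ⟨hrX, hrK⟩
      · have := key 3 1 (by omega) (by omega) (hAB (g 3) (g 1) hr h1X' h1K')
        have e1 : (3 + 1) % n = 4 := Nat.mod_eq_of_lt (by omega)
        have e2 : (1 + 1) % n = 2 := Nat.mod_eq_of_lt (by omega)
        omega
      · exact hCC (g 2) (g 3) (Or.inl c23) hq hr
      · have := key 0 3 (by omega) (by omega) (hAB (g 0) (g 3) h0' hrX hrK)
        have e1 : (0 + 1) % n = 1 := Nat.mod_eq_of_lt (by omega)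
        have e2 : (3 + 1) % n = 4 := Nat.mod_eq_of_lt (by omega)
        omega
    · -- q ∈ B
      have := key 0 2 (by omega) (by omega) (hAB (g 0) (g 2) h0' hqX hqK)
      have e1 : (0 + 1) % n = 1 := Nat.mod_eq_of_lt (by omega)
      have e2 : (2 + 1) % n = 3 := Nat.mod_eq_of_lt (by omega)
      omega
  · -- p ∈ B
    rcases cls (g 2) with hq | hq | ⟨hqX, hqK⟩
    · have := key 2 (n - 1) (by omega) (by omega) (hAB (g 2) (g (n - 1)) hq hpX hpK)
      have e1 : (2 + 1) % n = 3 := Nat.mod_eq_of_lt (by omega)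
      have e2 : (n - 1 + 1) % n = 0 := by
        have : n - 1 + 1 = n := by omega
        rw [this, Nat.mod_self]
      omega
    · rcases cls (g 3) with hr | hr | ⟨hrX, hrK⟩
      · have := key 3 1 (by omega) (by omega) (hAB (g 3) (g 1) hr h1X' h1K')
        have e1 : (3 + 1) % n = 4 := Nat.mod_eq_of_lt (by omega)
        have e2 : (1 + 1) % n = 2 := Nat.mod_eq_of_lt (by omega)
        omega
      · exact hCC (g 2) (g 3) (Or.inl c23) hq hr
      · have := key 0 3 (by omega) (by omega) (hAB (g 0) (g 3) h0' hrX hrK)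
        have e1 : (0 + 1) % n = 1 := Nat.mod_eq_of_lt (by omega)
        have e2 : (3 + 1) % n = 4 := Nat.mod_eq_of_lt (by omega)
        omega
    · have := key 0 2 (by omega) (by omega) (hAB (g 0) (g 2) h0' hqX hqK)
      have e1 : (0 + 1) % n = 1 := Nat.mod_eq_of_lt (by omega)
      have e2 : (2 + 1) % n = 3 := Nat.mod_eq_of_lt (by omega)
      omega

private lemma antihole_mixed {V : Type*} (G : SimpleGraph V) (K X : Set V)
    (hK : G.IsClique K)
    (hXmax : ∀ a ∈ X, ∀ b, b ∉ K → b ∉ X → ¬ G.Adj a b)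
    {n : ℕ} (hn : 5 ≤ n) (f : ZMod n → V) (hinj : Function.Injective f)
    (hadj : ∀ i j, Gᶜ.Adj (f i) (f j) ↔ (j = i + 1 ∨ i = j + 1))
    (i0 j0 : ZMod n) (h0 : f i0 ∈ X) (hjX : f j0 ∉ X) (hjK : f j0 ∉ K) :
    False := by
  have hc : j0 = i0 + 1 ∨ i0 = j0 + 1 := by
    by_contra hcon
    have hne : i0 ≠ j0 := fun h => hjX (h ▸ h0)
    have hA : G.Adj (f i0) (f j0) := by
      by_contra hna
      exact hcon ((hadj i0 j0).mp ((G.compl_adj (f i0) (f j0)).mpr ⟨hinj.ne hne, hna⟩))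
    exact hXmax _ h0 _ hjK hjX hA
  rcases hc with hc | hc
  · exact antihole_core G K X hK hXmax hn f hinj hadj i0 h0 (hc ▸ hjX) (hc ▸ hjK)
  · apply antihole_core G K X hK hXmax hn (fun i => f (-i))
      (hinj.comp neg_injective) ?_ (-i0) (by simpa using h0) ?hx ?hk
    case hx =>
      have he : -(-i0 + 1) = j0 := by linear_combination hc
      simpa [he] using hjX
    case hk =>
      have he : -(-i0 + 1) = j0 := by linear_combination hc
      simpa [he] using hjK
    · intro i j
      rw [hadj (-i) (-j)]
      constructor
      · rintro (h | h)
        · right; linear_combination h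
        · left; linear_combination h
      · rintro (h | h)
        · right; linear_combination h
        · left; linear_combination h

theorem stmt_4 {V : Type*} (G : SimpleGraph V) (K X : Set V)
    (hK : G.IsClique K)
    (hcut : ¬ (G.induce Kᶜ).Connected)
    -- X is a connected component of G − K:
    (hXK : X ⊆ Kᶜ) (hXne : X.Nonempty) (hXconn : (G.induce X).Connected)
    (hXmax : ∀ a ∈ X, ∀ b, b ∉ K → b ∉ X → ¬ G.Adj a b)
    (h1 : IsPerfect (G.induce (X ∪ K)))
    (h2 : IsPerfect (G.induce Xᶜ)) :
    IsPerfect G := by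
  have compl_induce : ∀ (S : Set V) (a b : S),
      (Gᶜ.induce S).Adj a b ↔ ((G.induce S)ᶜ).Adj a b := by
    intro S a b
    simp [SimpleGraph.compl_adj, Subtype.coe_injective.ne_iff]
  constructor
  · rintro ⟨n, hn5, hodd, f, hinj, hadj⟩
    by_cases hall : ∀ i, f i ∈ X ∪ K
    · exact h1.1 ⟨n, hn5, hodd, restrict f hinj hall hadj⟩
    · by_cases hall2 : ∀ i, f i ∈ Xᶜ
      · exact h2.1 ⟨n, hn5, hodd, restrict f hinj hall2 hadj⟩
      · push_neg at hall hall2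
        obtain ⟨j0, hj0⟩ := hall
        obtain ⟨i0, hi0⟩ := hall2
        rw [Set.mem_compl_iff, not_not] at hi0
        have hj0X : f j0 ∉ X := fun h => hj0 (Or.inl h)
        have hj0K : f j0 ∉ K := fun h => hj0 (Or.inr h)
        refine cycle_sep hn5 (fun i => f i ∈ X) (fun i => f i ∈ K) ?_ ?_ ?_ hi0 hj0X hj0K
        · intro a b ha hb hab
          exact (hadj a b).mp (hK ha hb (hinj.ne hab))
        · intro i hi hni
          by_contra hx
          exact hXmax _ hi _ hni hx ((hadj i (i + 1)).mpr (Or.inl rfl))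
        · intro i hi hni
          by_contra hx
          exact hXmax _ hi _ hni hx ((hadj i (i - 1)).mpr (Or.inr (by ring)))
  · rintro ⟨n, hn5, hodd, f, hinj, hadj⟩
    by_cases hall : ∀ i, f i ∈ X ∪ K
    · exact h1.2 ⟨n, hn5, hodd,
        hic_transfer (compl_induce (X ∪ K)) (restrict (G := Gᶜ) f hinj hall hadj)⟩
    · by_cases hall2 : ∀ i, f i ∈ Xᶜ
      · exact h2.2 ⟨n, hn5, hodd,
          hic_transfer (compl_induce Xᶜ) (restrict (G := Gᶜ) f hinj hall2 hadj)⟩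
      · push_neg at hall hall2
        obtain ⟨j0, hj0⟩ := hall
        obtain ⟨i0, hi0⟩ := hall2
        rw [Set.mem_compl_iff, not_not] at hi0
        have hj0X : f j0 ∉ X := fun h => hj0 (Or.inl h)
        have hj0K : f j0 ∉ K := fun h => hj0 (Or.inr h)
        exact antihole_mixed G K X hK hXmax hn5 f hinj hadj i0 j0 hi0 hj0X hj0K
end

section
/- Let G and F be perfect graphs and let v be a vertex of G. Then the graph G' obtained from G by replacing v with F — i.e., deleting v, adding a disjoint copy of F, and joining every vertex of F to every neighbor of v in G — is also perfect. -/
/-- The graph obtained from `G` by replacing the vertex `v` with the graph `F`: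
delete `v`, add a disjoint copy of `F`, and join every vertex of `F` to every
neighbor of `v` in `G`. -/
def replaceVertex {V W : Type*} (G : SimpleGraph V) (v : V) (F : SimpleGraph W) :
    SimpleGraph ({u : V // u ≠ v} ⊕ W) where
  Adj x y :=
    match x, y with
    | Sum.inl a, Sum.inl b => G.Adj a.1 b.1
    | Sum.inl a, Sum.inr _ => G.Adj a.1 v
    | Sum.inr _, Sum.inl b => G.Adj b.1 v
    | Sum.inr w, Sum.inr w' => F.Adj w w'
  symm := by
    constructor
    rintro (a | w) (b | w') h <;> simp_all [SimpleGraph.adj_comm]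
  loopless := by
    constructor
    rintro (a | w) h <;> simp_all

section Aux

variable {V W : Type*} {G : SimpleGraph V} {F : SimpleGraph W} {v : V}

private lemma zmod_ne_zero {n : ℕ} (hn : 5 ≤ n) (k : ℕ) (hk : 0 < k) (hk5 : k < 5) :
    ((k : ZMod n)) ≠ 0 := by
  rw [Ne, ZMod.natCast_eq_zero_iff]
  intro h
  have := Nat.le_of_dvd hk h
  omega

/-- If an induced cycle of length `≥ 5` in the substituted graph has a vertex of `F` at
position `i`, a vertex of `G` at position `i+1`, then no other position can carry a vertex
of `F`. -/
private lemma no_two_inr {n : ℕ} (hn : 5 ≤ n)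
    (f : ZMod n → ({u : V // u ≠ v} ⊕ W))
    (hadj : ∀ i j, (replaceVertex G v F).Adj (f i) (f j) ↔ (j = i + 1 ∨ i = j + 1))
    {i : ZMod n} {w : W} (hi : f i = Sum.inr w)
    {a : {u : V // u ≠ v}} (hi1 : f (i + 1) = Sum.inl a)
    {j : ZMod n} {w' : W} (hj : f j = Sum.inr w') (hij : j ≠ i) : False := by
  have h1 : (1 : ZMod n) ≠ 0 := by simpa using zmod_ne_zero hn 1 (by norm_num) (by norm_num)
  have h2 : (2 : ZMod n) ≠ 0 := by simpa using zmod_ne_zero hn 2 (by norm_num) (by norm_num)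
  have h3 : (3 : ZMod n) ≠ 0 := by simpa using zmod_ne_zero hn 3 (by norm_num) (by norm_num)
  have h4 : (4 : ZMod n) ≠ 0 := by simpa using zmod_ne_zero hn 4 (by norm_num) (by norm_num)
  -- a is adjacent to v in G
  have hav : G.Adj a.1 v := by
    have h := (hadj i (i + 1)).mpr (Or.inl rfl)
    rw [hi, hi1] at h
    exact h
  -- any position carrying an F-vertex is i or i+2
  have hstep : ∀ (k : ZMod n) (w'' : W), f k = Sum.inr w'' → k = i ∨ k = i + 2 := by
    intro k w'' hk
    have h : (replaceVertex G v F).Adj (f (i + 1)) (f k) := by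
      rw [hi1, hk]; exact hav
    rcases (hadj (i + 1) k).mp h with h' | h'
    · right; rw [h']; ring
    · left; linear_combination -h'
  have hji : j = i + 2 := by
    rcases hstep j w' hj with h' | h'
    · exact absurd h' hij
    · exact h'
  -- f (i - 1) cannot be an F-vertex
  have him : ∃ b : {u : V // u ≠ v}, f (i - 1) = Sum.inl b := by
    rcases hfm : f (i - 1) with b | w2
    · exact ⟨b, rfl⟩
    · rcases hstep (i - 1) w2 hfm with h' | h'
      · exact absurd (by linear_combination -h') h1
      · exact absurd (by linear_combination -h' : (3 : ZMod n) = 0) h3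
  obtain ⟨b, hb⟩ := him
  have hbv : G.Adj b.1 v := by
    have h := (hadj (i - 1) i).mpr (Or.inl (show i = i - 1 + 1 by ring))
    rw [hb, hi] at h
    exact h
  have h : (replaceVertex G v F).Adj (f (i - 1)) (f j) := by
    rw [hb, hj]; exact hbv
  rcases (hadj (i - 1) j).mp h with h' | h'
  · rw [hji] at h'
    exact absurd (by linear_combination h' : (2 : ZMod n) = 0) h2
  · rw [hji] at h'
    exact absurd (by linear_combination -h' : (4 : ZMod n) = 0) h4

private lemma oddHoleFree_replace (hG : OddHoleFree G) (hF : OddHoleFree F) :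
    OddHoleFree (replaceVertex G v F) := by
  rintro ⟨n, hn, hodd, f, hinj, hadj⟩
  haveI : NeZero n := ⟨by omega⟩
  have h1 : (1 : ZMod n) ≠ 0 := by simpa using zmod_ne_zero hn 1 (by norm_num) (by norm_num)
  by_cases hall : ∀ k, ∃ w : W, f k = Sum.inr w
  · -- the cycle lies entirely in F
    choose g hg using hall
    refine hF ⟨n, hn, hodd, g, ?_, ?_⟩
    · intro x y hxy
      apply hinj
      rw [hg x, hg y, hxy]
    · intro x y
      have : F.Adj (g x) (g y) ↔ (replaceVertex G v F).Adj (f x) (f y) := by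
        rw [hg x, hg y]; exact Iff.rfl
      rw [this]; exact hadj x y
  · push_neg at hall
    obtain ⟨k0, hk0⟩ := hall
    have hk0' : ∃ a : {u : V // u ≠ v}, f k0 = Sum.inl a := by
      rcases hfk : f k0 with a | w
      · exact ⟨a, rfl⟩
      · exact absurd rfl (hfk ▸ hk0 w ∘ fun h => h)
    obtain ⟨a0, ha0⟩ := hk0'
    by_cases hinr : ∃ i w, f i = Sum.inr w
    · -- mixed case: exactly one F-vertex; replace it by v
      obtain ⟨i0, w0, hi0⟩ := hinr
      -- the successor closure argument
      have huniq : ∀ ⦃j : ZMod n⦄ ⦃w' : W⦄, f j = Sum.inr w' → ∀ ⦃j2 : ZMod n⦄ ⦃w2 : W⦄,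
          f j2 = Sum.inr w2 → j = j2 := by
        intro j w' hj j2 w2 hj2
        by_contra hne
        -- there is a position with an F-vertex whose successor is a G-vertex
        have hstep : ¬ ∀ (i : ZMod n), (∃ w : W, f i = Sum.inr w) →
            (∃ w : W, f (i + 1) = Sum.inr w) := by
          intro hcl
          have hall' : ∀ m : ℕ, ∃ w : W, f (j + m) = Sum.inr w := by
            intro m
            induction m with
            | zero => refine ⟨w', ?_⟩; simpa using hj
            | succ m ih =>
              have := hcl (j + m) ih
              simpa [add_assoc] using this
          have := hall' ((k0 - j).val)
          rw [ZMod.natCast_zmod_val, add_sub_cancel] at this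
          obtain ⟨w'', hw''⟩ := this
          rw [ha0] at hw''
          exact absurd hw'' (by simp)
        push_neg at hstep
        obtain ⟨i1, ⟨w1, hw1⟩, hnr⟩ := hstep
        have hi1l : ∃ a : {u : V // u ≠ v}, f (i1 + 1) = Sum.inl a := by
          rcases hfk : f (i1 + 1) with a | w
          · exact ⟨a, rfl⟩
          · exact absurd hfk (hnr w)
        obtain ⟨a1, ha1⟩ := hi1l
        by_cases hji1 : j = i1
        · exact no_two_inr hn f hadj hw1 ha1 hj2 (fun h => hne (h ▸ hji1))
        · exact no_two_inr hn f hadj hw1 ha1 hj hji1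
      -- define the cycle in G
      set g : ZMod n → V := fun k => Sum.elim (fun a : {u : V // u ≠ v} => a.1) (fun _ => v) (f k)
        with hgdef
      have hgl : ∀ (k : ZMod n) (a : {u : V // u ≠ v}), f k = Sum.inl a → g k = a.1 := by
        intro k a hk; simp [hgdef, hk]
      have hgr : ∀ (k : ZMod n) (w : W), f k = Sum.inr w → g k = v := by
        intro k w hk; simp [hgdef, hk]
      refine hG ⟨n, hn, hodd, g, ?_, ?_⟩
      · intro x y hxy
        rcases hfx : f x with a | w <;> rcases hfy : f y with b | w'
        · rw [hgl x a hfx, hgl y b hfy] at hxy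
          exact hinj (by rw [hfx, hfy, Subtype.ext hxy])
        · rw [hgl x a hfx, hgr y w' hfy] at hxy
          exact absurd hxy a.2
        · rw [hgr x w hfx, hgl y b hfy] at hxy
          exact absurd hxy.symm b.2
        · exact (huniq hfx hfy)
      · intro x y
        rcases hfx : f x with a | w <;> rcases hfy : f y with b | w'
        · rw [hgl x a hfx, hgl y b hfy]
          have : G.Adj a.1 b.1 ↔ (replaceVertex G v F).Adj (f x) (f y) := by
            rw [hfx, hfy]; exact Iff.rfl
          rw [this]; exact hadj x y
        · rw [hgl x a hfx, hgr y w' hfy]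
          have : G.Adj a.1 v ↔ (replaceVertex G v F).Adj (f x) (f y) := by
            rw [hfx, hfy]; exact Iff.rfl
          rw [this]; exact hadj x y
        · rw [hgr x w hfx, hgl y b hfy]
          have : G.Adj v b.1 ↔ (replaceVertex G v F).Adj (f x) (f y) := by
            rw [hfx, hfy, G.adj_comm]; exact Iff.rfl
          rw [this]; exact hadj x y
        · rw [hgr x w hfx, hgr y w' hfy]
          have hxy : x = y := huniq hfx hfy
          subst hxy
          constructor
          · intro h; exact absurd h (G.loopless.irrefl v)
          · rintro (h | h) <;> exact absurd (by simpa using h.symm) (by simpa using h1)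
    · -- the cycle lies entirely in G minus v
      push_neg at hinr
      have hall' : ∀ k, ∃ a : {u : V // u ≠ v}, f k = Sum.inl a := by
        intro k
        rcases hfk : f k with a | w
        · exact ⟨a, rfl⟩
        · exact absurd hfk (hinr k w)
      choose g hg using hall'
      refine hG ⟨n, hn, hodd, fun k => (g k).1, ?_, ?_⟩
      · intro x y hxy
        apply hinj
        rw [hg x, hg y, Subtype.ext hxy]
      · intro x y
        have : G.Adj (g x).1 (g y).1 ↔ (replaceVertex G v F).Adj (f x) (f y) := by
          rw [hg x, hg y]; exact Iff.rfl
        rw [this]; exact hadj x y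

private lemma replace_compl :
    (replaceVertex G v F)ᶜ = replaceVertex Gᶜ v Fᶜ := by
  ext x y
  rcases x with a | w <;> rcases y with b | w'
  · simp only [SimpleGraph.compl_adj, replaceVertex, ne_eq, Sum.inl.injEq, Subtype.ext_iff]
  · simp only [SimpleGraph.compl_adj, replaceVertex, ne_eq]
    have := a.2
    simp [this]
  · simp only [SimpleGraph.compl_adj, replaceVertex, ne_eq]
    have := b.2
    simp [this]
  · simp only [SimpleGraph.compl_adj, replaceVertex, ne_eq, Sum.inr.injEq]

end Aux

theorem stmt_5 {V W : Type*} (G : SimpleGraph V) (F : SimpleGraph W) (v : V)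
    (hG : IsPerfect G) (hF : IsPerfect F) :
    IsPerfect (replaceVertex G v F) := by
  constructor
  · exact oddHoleFree_replace hG.1 hF.1
  · rw [replace_compl]
    exact oddHoleFree_replace hG.2 hF.2
end

section
/- Let H be a pattern graph with h = |V(H)| vertices, let μ ≥ 1 and k = h − μ, and let G be a host graph on n vertices. Consider the reconfiguration graph C whose nodes are the H-induced-subgraph-isomorphic sets of G (vertex subsets S with G[S] isomorphic to H) and where two nodes S, S' are adjacent iff |S \ S'| ≤ k. Then the diameter of every connected component of C is at most 2·C(n, μ), i.e., O(n^μ); in particular, any two reconfigurable H-induced-subgraph-isomorphic sets are joined by a sequence of length O(n^μ). -/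
/-- `S` is an `H`-induced-subgraph-isomorphic set of `G`. -/
def IsHSet {V W : Type*} (G : SimpleGraph V) (H : SimpleGraph W) (S : Finset V) : Prop :=
  Nonempty ((G.induce (S : Set V)) ≃g H)

theorem stmt_7 {V W : Type*} [Fintype V] [DecidableEq V] [Fintype W]
    (G : SimpleGraph V) (H : SimpleGraph W) (μ k : ℕ) (hμ : 1 ≤ μ)
    (hμh : μ ≤ Fintype.card W) (hk : k = Fintype.card W - μ)
    -- adjacency in the reconfiguration graph C
    (Adj : Finset V → Finset V → Prop)
    (hAdj : ∀ S S', Adj S S' ↔ IsHSet G H S ∧ IsHSet G H S' ∧ (S \ S').card ≤ k)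
    (Ss St : Finset V) (hreach : Relation.ReflTransGen Adj Ss St) (hSs : IsHSet G H Ss)
    (hSt : IsHSet G H St) :
    ∃ ℓ : ℕ, ℓ ≤ 2 * (Fintype.card V).choose μ ∧
      ∃ f : Fin (ℓ + 1) → Finset V, f 0 = Ss ∧ f (Fin.last ℓ) = St ∧
        ∀ i : Fin ℓ, Adj (f i.castSucc) (f i.succ) := by
  classical
  -- cardinality of an H-set
  have hcard : ∀ S : Finset V, IsHSet G H S → S.card = Fintype.card W := by
    intro S ⟨e⟩
    simpa using Fintype.card_congr e.toEquiv
  set c : ℕ := (Fintype.card V).choose μ with hc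
  set P : ℕ → Prop := fun ℓ => ∃ f : Fin (ℓ + 1) → Finset V, f 0 = Ss ∧ f (Fin.last ℓ) = St ∧
      ∀ i : Fin ℓ, Adj (f i.castSucc) (f i.succ) with hP
  -- existence of some path
  have hex : ∃ ℓ, P ℓ := by
    rw [hP]
    clear hP hSt
    clear_value P
    clear P
    induction hreach with
    | refl => exact ⟨0, fun _ => Ss, rfl, rfl, fun i => absurd i.2 (by omega)⟩
    | @tail b c hab hbc ih =>
      obtain ⟨ℓ, f, hf0, hfl, hchain⟩ := ih
      refine ⟨ℓ + 1, fun m => if h : m.val < ℓ + 1 then f ⟨m.val, h⟩ else c, ?_, ?_, ?_⟩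
      · simpa using hf0
      · simp [Fin.last]
      · intro i
        rcases Nat.lt_or_ge i.val ℓ with h | h
        · have := hchain ⟨i.val, h⟩
          simp only [Fin.castSucc, Fin.castAdd, Fin.castLE, Fin.succ] at this ⊢
          rw [dif_pos (by omega), dif_pos (by omega)]
          exact this
        · have hiv : i.val = ℓ := by omega
          simp only [Fin.castSucc, Fin.castAdd, Fin.castLE, Fin.succ]
          rw [dif_pos (by omega), dif_neg (by omega)]
          have : (⟨i.val, by omega⟩ : Fin (ℓ + 1)) = Fin.last ℓ := by
            ext; simpa using hiv
          rw [this, hfl]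
          exact hbc
  -- shortening: any path can be shortened to length ≤ 2 * c
  have key : ∀ ℓ, P ℓ → ∃ ℓ' ≤ 2 * c, P ℓ' := by
    intro ℓ
    induction ℓ using Nat.strong_induction_on with
    | _ ℓ ih =>
      intro hPℓ
      by_cases hle : ℓ ≤ 2 * c
      · exact ⟨ℓ, hle, hPℓ⟩
      · obtain ⟨f, hf0, hfl, hchain⟩ := hPℓ
        -- every node on the path is an H-set
        have hHall : ∀ i : Fin (ℓ + 1), IsHSet G H (f i) := by
          intro i
          rcases Nat.lt_or_ge i.val ℓ with h | h
          · have := hchain ⟨i.val, h⟩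
            rw [hAdj] at this
            have he : (⟨i.val, h⟩ : Fin ℓ).castSucc = i := by ext; rfl
            rw [he] at this
            exact this.1
          · have : i = Fin.last ℓ := by ext; simp; omega
            rw [this, hfl]; exact hSt
        -- choose a μ-subset of each node
        have hsub : ∀ i : Fin (ℓ + 1), ∃ T : Finset V, T ⊆ f i ∧ T.card = μ := by
          intro i
          exact Finset.exists_subset_card_eq (by rw [hcard _ (hHall i)]; exact hμh)
        choose T hTsub hTcard using hsub
        -- adjacency from a shared μ-subset
        have hshort : ∀ i j : Fin (ℓ + 1), T i = T j → Adj (f i) (f j) := by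
          intro i j hT
          rw [hAdj]
          refine ⟨hHall i, hHall j, ?_⟩
          have h1 : T i ⊆ f i ∩ f j := by
            rw [Finset.subset_inter_iff]
            exact ⟨hTsub i, hT ▸ hTsub j⟩
          have h2 : μ ≤ (f i ∩ f j).card := by
            rw [← hTcard i]; exact Finset.card_le_card h1
          have h3 := Finset.card_sdiff_add_card_inter (f i) (f j)
          have h4 := hcard _ (hHall i)
          omega
        -- pigeonhole: some μ-subset is used by three nodes
        set g : Fin (ℓ + 1) → {x // x ∈ Finset.powersetCard μ (Finset.univ : Finset V)} :=
          fun i => ⟨T i, Finset.mem_powersetCard.2 ⟨Finset.subset_univ _, hTcard i⟩⟩ with hg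
        have hcardβ : Fintype.card {x // x ∈ Finset.powersetCard μ (Finset.univ : Finset V)} = c := by
          rw [Fintype.card_coe, Finset.card_powersetCard, Finset.card_univ]
        have hpig := Fintype.exists_lt_card_fiber_of_mul_lt_card (n := 2) g
          (by rw [hcardβ, Fintype.card_fin]; omega)
        obtain ⟨y, hy⟩ := hpig
        rw [Finset.two_lt_card] at hy
        obtain ⟨a, ha, b, hb, d, hd, hab, had, hbd⟩ := hy
        simp only [Finset.mem_filter] at ha hb hd
        -- two of a, b, d have values differing by at least 2
        have hvals : ∃ i j : Fin (ℓ + 1), g i = y ∧ g j = y ∧ i.val + 2 ≤ j.val := by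
          have h1 : a.val ≠ b.val := fun h => hab (Fin.ext h)
          have h2 : a.val ≠ d.val := fun h => had (Fin.ext h)
          have h3 : b.val ≠ d.val := fun h => hbd (Fin.ext h)
          rcases Nat.lt_or_ge (a.val + 2) (b.val + 1) with h | h
          · exact ⟨a, b, ha.2, hb.2, by omega⟩
          rcases Nat.lt_or_ge (b.val + 2) (a.val + 1) with h' | h'
          · exact ⟨b, a, hb.2, ha.2, by omega⟩
          -- a, b adjacent values; d differs by ≥ 2 from one of them
          rcases Nat.lt_or_ge d.val (min a.val b.val) with h'' | h''
          · rcases Nat.lt_or_ge (d.val + 2) (max a.val b.val + 1) with h3' | h3'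
            · rcases Nat.le_total a.val b.val with hab' | hab'
              · exact ⟨d, b, hd.2, hb.2, by omega⟩
              · exact ⟨d, a, hd.2, ha.2, by omega⟩
            · omega
          · rcases Nat.le_total a.val b.val with hab' | hab'
            · exact ⟨a, d, ha.2, hd.2, by omega⟩
            · exact ⟨b, d, hb.2, hd.2, by omega⟩
        obtain ⟨i, j, hgi, hgj, hij⟩ := hvals
        have hTij : T i = T j := by
          have : g i = g j := hgi.trans hgj.symm
          simpa [hg, Subtype.ext_iff] using this
        have hAdjij : Adj (f i) (f j) := hshort i j hTij
        -- splice out the segment between i and j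
        set d' : ℕ := j.val - i.val - 1 with hd'
        have hd'pos : 1 ≤ d' := by omega
        have hjle : j.val ≤ ℓ := by omega
        set ℓ'' : ℕ := ℓ - d' with hℓ''
        have hlt : ℓ'' < ℓ := by omega
        refine ih ℓ'' hlt ⟨fun m => if m.val ≤ i.val then f ⟨m.val, by omega⟩
          else f ⟨m.val + d', by omega⟩, ?_, ?_, ?_⟩
        · beta_reduce
          rw [if_pos (by simp)]
          have e : (⟨((0 : Fin (ℓ'' + 1)) : ℕ), by omega⟩ : Fin (ℓ + 1)) = 0 := by ext; simp
          rw [e, hf0]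
        · have hgt : ¬ (Fin.last ℓ'').val ≤ i.val := by simp [Fin.last]; omega
          beta_reduce
          rw [if_neg hgt]
          have : (⟨(Fin.last ℓ'').val + d', by omega⟩ : Fin (ℓ + 1)) = Fin.last ℓ := by
            ext; simp [Fin.last]; omega
          rw [this, hfl]
        · intro m
          have hm : m.val < ℓ'' := m.2
          have hcs : (m.castSucc).val = m.val := rfl
          have hsc : (m.succ).val = m.val + 1 := rfl
          have hfeq : ∀ (a : ℕ) (ha : a < ℓ + 1) (z : Fin (ℓ + 1)), a = z.val →
              f ⟨a, ha⟩ = f z := by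
            intro a ha z haz
            exact congrArg f (Fin.ext haz)
          beta_reduce
          split_ifs with h1 h2 h3
          · -- both in first branch
            exact hchain ⟨m.val, by omega⟩
          · -- the shortcut edge: m.val = i.val
            rw [hfeq _ _ i (by omega), hfeq _ _ j
              (show ((m.succ : ℕ) + d' : ℕ) = j.val by omega)]
            exact hAdjij
          · -- impossible
            omega
          · -- both in second branch
            rw [hfeq _ _ (⟨m.val + d', by omega⟩ : Fin (ℓ + 1))
                (show ((m.castSucc : ℕ) + d' : ℕ) = m.val + d' by omega),
              hfeq _ _ (⟨m.val + d' + 1, by omega⟩ : Fin (ℓ + 1))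
                (show ((m.succ : ℕ) + d' : ℕ) = m.val + d' + 1 by omega)]
            exact hchain ⟨m.val + d', by omega⟩
  obtain ⟨ℓ0, hℓ0⟩ := hex
  obtain ⟨ℓ', hℓ'le, hPℓ'⟩ := key ℓ0 hℓ0
  exact ⟨ℓ', hℓ'le, hPℓ'⟩
end

section
/- Let H be a pattern graph, μ ≥ 1 a positive integer, k = |V(H)| − μ, and G a host graph. Define the reconfiguration graph C: nodes are the H-induced-subgraph-isomorphic sets of G, with S, S' adjacent iff |S ∩ S'| ≥ μ. Define the clique-compressed reconfiguration graph C': nodes are the μ-element subsets of V(G), with T, T' adjacent iff there exists an H-induced-subgraph-isomorphic set S of G with T ∪ T' ⊆ S. Let S_s, S_t be two H-induced-subgraph-isomorphic sets of G. Then S_s and S_t lie in the same connected component of C if and only if for every (equivalently, some) pair of μ-element subsets I ⊆ S_s and J ⊆ S_t, the nodes I and J lie in the same connected component of C'. -/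
/-- Adjacency in the reconfiguration graph `C` under `k`-token jumping with
`k = |V(H)| − μ`: two `H`-sets are adjacent iff they share at least `μ` vertices. -/
def StepC {V W : Type*} [DecidableEq V] (G : SimpleGraph V) (H : SimpleGraph W) (μ : ℕ)
    (S S' : Finset V) : Prop :=
  IsHSet G H S ∧ IsHSet G H S' ∧ μ ≤ (S ∩ S').card

/-- Adjacency in the clique-compressed reconfiguration graph `C'`:
two `μ`-element vertex subsets are adjacent iff some `H`-set contains both. -/
def StepC' {V W : Type*} [DecidableEq V] (G : SimpleGraph V) (H : SimpleGraph W) (μ : ℕ)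
    (T T' : Finset V) : Prop :=
  T.card = μ ∧ T'.card = μ ∧ ∃ S : Finset V, IsHSet G H S ∧ T ∪ T' ⊆ S

lemma isHSet_card {V W : Type*} [Fintype W] {G : SimpleGraph V} {H : SimpleGraph W}
    {S : Finset V} (h : IsHSet G H S) : S.card = Fintype.card W := by
  obtain ⟨e⟩ := h
  have := Fintype.card_congr e.toEquiv
  simpa using this

theorem stmt_8 {V W : Type*} [DecidableEq V] [Fintype W]
    (G : SimpleGraph V) (H : SimpleGraph W) (μ : ℕ) (hμ : 1 ≤ μ)
    (hμh : μ ≤ Fintype.card W)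
    (Ss St : Finset V) (hSs : IsHSet G H Ss) (hSt : IsHSet G H St) :
    Relation.ReflTransGen (StepC G H μ) Ss St ↔
      ∀ I ⊆ Ss, ∀ J ⊆ St, I.card = μ → J.card = μ →
        Relation.ReflTransGen (StepC' G H μ) I J := by
  constructor
  · intro h
    clear hSt
    intro I hI
    induction h with
    | refl =>
        intro J hJ hIc hJc
        exact Relation.ReflTransGen.single
          ⟨hIc, hJc, Ss, hSs, Finset.union_subset hI hJ⟩
    | @tail b c hab hbc ih =>
        intro J hJ hIc hJc
        obtain ⟨hb, hc, hcard⟩ := hbc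
        obtain ⟨T, hTsub, hTcard⟩ := Finset.exists_subset_card_eq hcard
        have h1 := ih T (hTsub.trans Finset.inter_subset_left) hIc hTcard
        exact h1.tail ⟨hTcard, hJc, c, hc,
          Finset.union_subset (hTsub.trans Finset.inter_subset_right) hJ⟩
  · intro h
    obtain ⟨I, hI, hIc⟩ : ∃ I ⊆ Ss, I.card = μ :=
      Finset.exists_subset_card_eq (by rw [isHSet_card hSs]; exact hμh)
    obtain ⟨J, hJ, hJc⟩ : ∃ J ⊆ St, J.card = μ :=
      Finset.exists_subset_card_eq (by rw [isHSet_card hSt]; exact hμh)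
    have hpath := h I hI J hJ hIc hJc
    have key : ∀ X, Relation.ReflTransGen (StepC' G H μ) I X →
        ∀ B, IsHSet G H B → X ⊆ B → Relation.ReflTransGen (StepC G H μ) Ss B := by
      intro X hX
      induction hX with
      | refl =>
          intro B hB hIB
          exact Relation.ReflTransGen.single ⟨hSs, hB, by
            calc μ = I.card := hIc.symm
              _ ≤ _ := Finset.card_le_card (Finset.subset_inter hI hIB)⟩
      | @tail b c hab hbc ih =>
          intro B hB hsubB
          obtain ⟨hbc1, hcc, S, hS, hsub⟩ := hbc
          refine (ih S hS (Finset.subset_union_left.trans hsub)).tail ⟨hS, hB, ?_⟩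
          calc μ = c.card := hcc.symm
            _ ≤ _ := Finset.card_le_card
              (Finset.subset_inter (Finset.subset_union_right.trans hsub) hsubB)
    exact key J hpath St hSt hJ
end

section
/- Let G be a graph whose vertex set is partitioned into cliques (layers) L_1, ..., L_n, each of size s, such that the only edges between distinct layers connect consecutive layers L_i and L_{i+1}. Suppose every induced subgraph of G on a subset of L_i ∪ L_{i+1} (for each i) is perfect. Then G is perfect. -/
private lemma signConst (a N : ℕ) (g : ℕ → ℕ)
    (hstep : ∀ t, t < N → (g t ≤ g (t+1) + 1 ∧ g (t+1) ≤ g t + 1))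
    (hne : ∀ t, t ≤ N → g t ≠ a + 1) :
    ∀ t, t ≤ N → (g t ≤ a ↔ g 0 ≤ a) := by
  intro t
  induction t with
  | zero => intro _; exact Iff.rfl
  | succ t ih =>
    intro ht
    have h1 := hstep t (by omega)
    have h2 := hne (t+1) (by omega)
    have h3 := hne t (by omega)
    have h4 := ih (by omega)
    omega

private lemma zmodAddVal {n : ℕ} [NeZero n] (c m : ZMod n) :
    c + ((m - c).val : ZMod n) = m := by
  rw [ZMod.natCast_val, ZMod.cast_id]; ring

private lemma zmodNeZero {n : ℕ} (k : ℕ) (hk : 0 < k) (hkn : k < n) :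
    ((k : ℕ) : ZMod n) ≠ 0 := by
  haveI : NeZero n := ⟨by omega⟩
  intro h
  rw [ZMod.natCast_eq_zero_iff] at h
  have := Nat.le_of_dvd hk h
  omega

private lemma holeInduce {V : Type*} {G' : SimpleGraph V} {s' : Set V} {m : ℕ}
    (f : ZMod m → V) (hinj : Function.Injective f)
    (hadj : ∀ i j, G'.Adj (f i) (f j) ↔ (j = i + 1 ∨ i = j + 1))
    (hr : ∀ i, f i ∈ s') : HasInducedCycle (G'.induce s') m := by
  refine ⟨fun i => ⟨f i, hr i⟩, ?_, ?_⟩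
  · intro i j h
    exact hinj (congrArg Subtype.val h)
  · intro i j
    rw [← hadj i j]
    simp

private lemma complInduce {V : Type*} (G : SimpleGraph V) (s' : Set V) :
    (G.induce s')ᶜ = Gᶜ.induce s' := by
  ext a b
  simp [Subtype.ext_iff, not_and_or]

theorem stmt_9 {V : Type*} [Fintype V] (G : SimpleGraph V)
    (n s : ℕ) (layer : V → Fin n)
    -- every layer has size s
    (hsize : ∀ i : Fin n, Nat.card {v : V // layer v = i} = s)
    -- every layer is a clique
    (hclique : ∀ u v : V, u ≠ v → layer u = layer v → G.Adj u v)
    -- edges between distinct layers only between consecutive layers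
    (hconsec : ∀ u v : V, G.Adj u v →
      layer u = layer v ∨ (layer u : ℕ) + 1 = (layer v : ℕ) ∨
        (layer v : ℕ) + 1 = (layer u : ℕ))
    -- every induced subgraph on a subset of two consecutive layers is perfect
    (hperf : ∀ i : ℕ, ∀ s' : Set V,
      (∀ x ∈ s', (layer x : ℕ) = i ∨ (layer x : ℕ) = i + 1) →
      IsPerfect (G.induce s')) :
    IsPerfect G := by
  classical
  constructor
  -- ============ Part 1: G itself has no odd hole ============
  · rintro ⟨m, hm5, hmodd, f, hinj, hadj⟩
    haveI : NeZero m := ⟨by omega⟩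
    have hfne : ∀ p q : ZMod m, p ≠ q → f p ≠ f q :=
      fun p q hpq h => hpq (hinj h)
    have hDiff : ∀ p q : ZMod m, G.Adj (f p) (f q) →
        ((layer (f p) : ℕ) ≤ (layer (f q) : ℕ) + 1 ∧
         (layer (f q) : ℕ) ≤ (layer (f p) : ℕ) + 1) := by
      intro p q h
      rcases hconsec _ _ h with h1 | h1 | h1
      · rw [h1]; omega
      · omega
      · omega
    have hCons : ∀ p : ZMod m, G.Adj (f p) (f (p + 1)) :=
      fun p => (hadj p (p + 1)).mpr (Or.inl rfl)
    have hStep : ∀ p : ZMod m,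
        (layer (f p) : ℕ) ≤ (layer (f (p+1)) : ℕ) + 1 ∧
        (layer (f (p+1)) : ℕ) ≤ (layer (f p) : ℕ) + 1 :=
      fun p => hDiff _ _ (hCons p)
    have hSame : ∀ p q : ZMod m, p ≠ q →
        (layer (f p) : ℕ) = (layer (f q) : ℕ) → q = p + 1 ∨ p = q + 1 := by
      intro p q hpq h
      exact (hadj p q).mp (hclique _ _ (hfne p q hpq) (Fin.ext h))
    obtain ⟨i, -, hi⟩ := Finset.exists_min_image Finset.univ
      (fun p : ZMod m => (layer (f p) : ℕ)) ⟨0, Finset.mem_univ 0⟩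
    obtain ⟨j, -, hj⟩ := Finset.exists_max_image Finset.univ
      (fun p : ZMod m => (layer (f p) : ℕ)) ⟨0, Finset.mem_univ 0⟩
    simp only [Finset.mem_univ, forall_true_left] at hi hj
    by_cases hsp : (layer (f j) : ℕ) ≤ (layer (f i) : ℕ) + 1
    · -- everything in two consecutive layers
      have hmem : ∀ x ∈ Set.range f,
          (layer x : ℕ) = (layer (f i) : ℕ) ∨ (layer x : ℕ) = (layer (f i) : ℕ) + 1 := by
        rintro x ⟨p, rfl⟩
        have h1 := hi p
        have h2 := hj p
        omega
      exact (hperf _ _ hmem).1 ⟨m, hm5, hmodd, holeInduce f hinj hadj (fun p => ⟨p, rfl⟩)⟩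
    · -- spread ≥ 2 : clique-cutset argument
      -- there is a vertex on layer a+1
      have hex : ∃ k0 : ZMod m, (layer (f k0) : ℕ) = (layer (f i) : ℕ) + 1 := by
        by_contra hK
        push_neg at hK
        have hiv := signConst (layer (f i)) ((j - i).val)
          (fun t => (layer (f (i + (t : ZMod m))) : ℕ))
          (fun t _ => by
            have h := hStep (i + (t : ZMod m))
            have he : i + ((t+1 : ℕ) : ZMod m) = (i + (t : ZMod m)) + 1 := by
              push_cast; ring
            simp only [he]; exact h)
          (fun t _ => hK _)
        have h0 : (layer (f (i + ((0 : ℕ) : ZMod m))) : ℕ) ≤ (layer (f i) : ℕ) := by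
          simp
        have hNle := (hiv ((j - i).val) le_rfl).mpr h0
        simp only [zmodAddVal] at hNle
        omega
      obtain ⟨k0, hk0⟩ := hex
      -- all vertices on layer a+1 lie in {k, k+1}
      have hkey : ∃ k : ZMod m, (layer (f k) : ℕ) = (layer (f i) : ℕ) + 1 ∧
          ∀ p : ZMod m, (layer (f p) : ℕ) = (layer (f i) : ℕ) + 1 →
            p = k ∨ p = k + 1 := by
        by_cases h1 : (layer (f (k0 - 1)) : ℕ) = (layer (f i) : ℕ) + 1
        · refine ⟨k0 - 1, h1, ?_⟩
          intro p hp
          by_cases hpk : p = k0 - 1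
          · exact Or.inl hpk
          by_cases hpk0 : p = k0
          · right; rw [hpk0]; ring
          rcases hSame k0 p (Ne.symm hpk0) (hk0.trans hp.symm) with h2 | h2
          · exfalso
            rcases hSame (k0 - 1) p (Ne.symm hpk) (h1.trans hp.symm) with h3 | h3
            · exact hpk0 (by rw [h3]; ring)
            · exact zmodNeZero (n := m) 3 (by omega) (by omega)
                (by push_cast; linear_combination -h3 - h2)
          · exact absurd (by rw [h2]; ring) hpk
        · refine ⟨k0, hk0, ?_⟩
          intro p hp
          by_cases hpk0 : p = k0
          · exact Or.inl hpk0
          rcases hSame k0 p (Ne.symm hpk0) (hk0.trans hp.symm) with h2 | h2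
          · exact Or.inr h2
          · exfalso
            apply h1
            rw [show k0 - 1 = p by rw [h2]; ring]
            exact hp
      obtain ⟨k, hk, hKsub⟩ := hkey
      have hik : i ≠ k := by intro h; rw [← h] at hk; omega
      have hjk : j ≠ k := by intro h; rw [← h] at hk; omega
      -- the walk  t ↦ L (k+2+t)  for t = 0 .. m-3 avoids layer a+1
      have hgadj : ∀ t : ℕ,
          (layer (f (k + 2 + (t : ZMod m))) : ℕ) ≤ (layer (f (k + 2 + ((t+1 : ℕ) : ZMod m))) : ℕ) + 1 ∧
          (layer (f (k + 2 + ((t+1 : ℕ) : ZMod m))) : ℕ) ≤ (layer (f (k + 2 + (t : ZMod m))) : ℕ) + 1 := by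
        intro t
        have h := hStep (k + 2 + (t : ZMod m))
        have he : k + 2 + ((t+1 : ℕ) : ZMod m) = (k + 2 + (t : ZMod m)) + 1 := by
          push_cast; ring
        simp only [he]; exact h
      have hgne : ∀ t : ℕ, t ≤ m - 3 →
          (layer (f (k + 2 + (t : ZMod m))) : ℕ) ≠ (layer (f i) : ℕ) + 1 := by
        intro t ht hcon
        have htm : t < m := by omega
        rcases hKsub _ hcon with h2 | h2
        · have h3 : (t : ZMod m) = ((m - 2 : ℕ) : ZMod m) := by
            rw [Nat.cast_sub (by omega : 2 ≤ m)]
            push_cast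
            simp only [ZMod.natCast_self]
            linear_combination h2
          have := congrArg ZMod.val h3
          rw [ZMod.val_cast_of_lt htm, ZMod.val_cast_of_lt (by omega)] at this
          omega
        · have h3 : (t : ZMod m) = ((m - 1 : ℕ) : ZMod m) := by
            rw [Nat.cast_sub (by omega : 1 ≤ m)]
            push_cast
            simp only [ZMod.natCast_self]
            linear_combination h2
          have := congrArg ZMod.val h3
          rw [ZMod.val_cast_of_lt htm, ZMod.val_cast_of_lt (by omega)] at this
          omega
      -- every vertex other than k, k+1 is on the walk
      have hcover : ∀ w : ZMod m, w ≠ k → w ≠ k + 1 →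
          (w - (k+2)).val ≤ m - 3 ∧ k + 2 + (((w - (k+2)).val : ℕ) : ZMod m) = w := by
        intro w hw1 hw2
        refine ⟨?_, zmodAddVal _ _⟩
        have hv : (w - (k+2)).val < m := ZMod.val_lt _
        have hcast : (((w - (k+2)).val : ℕ) : ZMod m) = w - (k+2) := by
          rw [ZMod.natCast_val, ZMod.cast_id]
        by_contra hge
        push_neg at hge
        have hcases : (w - (k+2)).val = m - 2 ∨ (w - (k+2)).val = m - 1 := by omega
        rcases hcases with h | h
        · apply hw1
          have h2 : w - (k+2) = ((m - 2 : ℕ) : ZMod m) := by rw [← hcast, h]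
          rw [Nat.cast_sub (by omega : 2 ≤ m)] at h2
          push_cast at h2
          simp only [ZMod.natCast_self] at h2
          linear_combination h2
        · apply hw2
          have h2 : w - (k+2) = ((m - 1 : ℕ) : ZMod m) := by rw [← hcast, h]
          rw [Nat.cast_sub (by omega : 1 ≤ m)] at h2
          push_cast at h2
          simp only [ZMod.natCast_self] at h2
          linear_combination h2
      -- a low point on the walk
      have hlow : ∃ t, t ≤ m - 3 ∧
          (layer (f (k + 2 + (t : ZMod m))) : ℕ) ≤ (layer (f i) : ℕ) := by
        by_cases hik1 : i = k + 1
        · refine ⟨0, by omega, ?_⟩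
          have he : k + 2 + ((0 : ℕ) : ZMod m) = i + 1 := by rw [hik1]; push_cast; ring
          have h := hStep i
          have hne0 := hgne 0 (by omega)
          rw [he] at hne0 ⊢
          omega
        · obtain ⟨ht, he⟩ := hcover i hik hik1
          exact ⟨_, ht, by rw [he]⟩
      -- a high point on the walk
      have hhigh : ∃ t, t ≤ m - 3 ∧
          (layer (f i) : ℕ) + 2 ≤ (layer (f (k + 2 + (t : ZMod m))) : ℕ) := by
        by_cases hjk1 : j = k + 1
        · refine ⟨0, by omega, ?_⟩
          have he : k + 2 + ((0 : ℕ) : ZMod m) = j + 1 := by rw [hjk1]; push_cast; ring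
          have h := hStep j
          have hne0 := hgne 0 (by omega)
          rw [he] at hne0 ⊢
          omega
        · obtain ⟨ht, he⟩ := hcover j hjk hjk1
          refine ⟨_, ht, by rw [he]; omega⟩
      obtain ⟨t1, ht1, hv1⟩ := hlow
      obtain ⟨t2, ht2, hv2⟩ := hhigh
      have hiv := signConst (layer (f i)) (m - 3)
        (fun t => (layer (f (k + 2 + (t : ZMod m))) : ℕ))
        (fun t _ => hgadj t) hgne
      have e1 := hiv t1 ht1
      have e2 := hiv t2 ht2
      omega
  -- ============ Part 2: Gᶜ has no odd hole ============
  · rintro ⟨m, hm5, hmodd, f, hinj, hadj⟩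
    haveI : NeZero m := ⟨by omega⟩
    have hDiff : ∀ u v : V, G.Adj u v →
        ((layer u : ℕ) ≤ (layer v : ℕ) + 1 ∧ (layer v : ℕ) ≤ (layer u : ℕ) + 1) := by
      intro u v h
      rcases hconsec _ _ h with h1 | h1 | h1
      · rw [h1]; omega
      · omega
      · omega
    -- the key claim, stated for arbitrary holes of Gᶜ so that it can also be
    -- applied to the reversed hole
    have main : ∀ g : ZMod m → V, Function.Injective g →
        (∀ p q, Gᶜ.Adj (g p) (g q) ↔ (q = p + 1 ∨ p = q + 1)) →
        ∀ p : ZMod m, ¬ ((layer (g p) : ℕ) + 2 ≤ (layer (g (p + 1)) : ℕ)) := by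
      intro g hginj hgadj p hcon
      have hgne : ∀ u w : ZMod m, u ≠ w → g u ≠ g w :=
        fun u w huw h => huw (hginj h)
      have hGadj : ∀ u w : ZMod m, u ≠ w → ¬(w = u + 1 ∨ u = w + 1) → G.Adj (g u) (g w) := by
        intro u w huw hnc
        have h2 : ¬ Gᶜ.Adj (g u) (g w) := fun h => hnc ((hgadj u w).mp h)
        rw [SimpleGraph.compl_adj] at h2
        push_neg at h2
        exact h2 (hgne u w huw)
      have hconsNadj : ∀ u : ZMod m, ¬ G.Adj (g u) (g (u + 1)) := by
        intro u
        exact ((SimpleGraph.compl_adj G (g u) (g (u+1))).mp ((hgadj u (u+1)).mpr (Or.inl rfl))).2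
      have hshift : ∀ (u : ZMod m) (d : ℕ), 0 < d → d < m → u ≠ u + (d : ℕ) := by
        intro u d h1 h2 h
        exact zmodNeZero (n := m) d h1 h2 (by linear_combination -h)
      have hadjd : ∀ (u : ZMod m) (d : ℕ), 2 ≤ d → d + 2 ≤ m → G.Adj (g u) (g (u + (d : ℕ))) := by
        intro u d h2 hm2
        apply hGadj
        · exact hshift u d (by omega) (by omega)
        · rintro (h | h)
          · refine zmodNeZero (n := m) (d - 1) (by omega) (by omega) ?_
            rw [Nat.cast_sub (by omega : 1 ≤ d)]
            push_cast
            linear_combination h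
          · refine zmodNeZero (n := m) (d + 1) (by omega) (by omega) ?_
            push_cast
            linear_combination -h
      have h1ne : ∀ u : ZMod m, u ≠ u + 1 := by
        intro u h
        have := zmodNeZero (n := m) 1 (by omega) (by omega)
        push_cast at this
        exact this (by linear_combination -h)
      have hsameNe : ∀ u w : ZMod m, u ≠ w → ¬ G.Adj (g u) (g w) →
          (layer (g u) : ℕ) ≠ (layer (g w) : ℕ) := by
        intro u w huw hna h
        exact hna (hclique _ _ (hgne u w huw) (Fin.ext h))
      -- x = p+3, y = p+2, z = p+4
      have hx1 := hDiff _ _ (hadjd p 3 (by omega) (by omega))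
      have hx2 := hDiff _ _ (hadjd (p+1) 2 (by omega) (by omega))
      have ex2 : (p + 1) + ((2:ℕ) : ZMod m) = p + ((3:ℕ) : ZMod m) := by push_cast; ring
      rw [ex2] at hx2
      have hy1 := hDiff _ _ (hadjd p 2 (by omega) (by omega))
      -- y and x = y+1 consecutive: different layers
      have ex3 : (p + ((2:ℕ) : ZMod m)) + 1 = p + ((3:ℕ) : ZMod m) := by push_cast; ring
      have hyx : (layer (g (p + ((2:ℕ) : ZMod m))) : ℕ) ≠ (layer (g (p + ((3:ℕ) : ZMod m))) : ℕ) := by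
        have h := hconsNadj (p + ((2:ℕ) : ZMod m))
        rw [ex3] at h
        exact hsameNe _ _ (by rw [← ex3]; exact h1ne _) h
      have hz1 := hDiff _ _ (hadjd (p+1) 3 (by omega) (by omega))
      have ez1 : (p + 1) + ((3:ℕ) : ZMod m) = p + ((4:ℕ) : ZMod m) := by push_cast; ring
      rw [ez1] at hz1
      have hz2 := hDiff _ _ (hadjd (p + ((2:ℕ) : ZMod m)) 2 (by omega) (by omega))
      have ez2 : (p + ((2:ℕ) : ZMod m)) + ((2:ℕ) : ZMod m) = p + ((4:ℕ) : ZMod m) := by push_cast; ring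
      rw [ez2] at hz2
      -- x and z = x+1 consecutive: different layers
      have ez3 : (p + ((3:ℕ) : ZMod m)) + 1 = p + ((4:ℕ) : ZMod m) := by push_cast; ring
      have hxz : (layer (g (p + ((3:ℕ) : ZMod m))) : ℕ) ≠ (layer (g (p + ((4:ℕ) : ZMod m))) : ℕ) := by
        have h := hconsNadj (p + ((3:ℕ) : ZMod m))
        rw [ez3] at h
        exact hsameNe _ _ (by rw [← ez3]; exact h1ne _) h
      omega
    -- now the usual min/max
    have hfne : ∀ p q : ZMod m, p ≠ q → f p ≠ f q :=
      fun p q hpq h => hpq (hinj h)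
    obtain ⟨i, -, hi⟩ := Finset.exists_min_image Finset.univ
      (fun p : ZMod m => (layer (f p) : ℕ)) ⟨0, Finset.mem_univ 0⟩
    obtain ⟨j, -, hj⟩ := Finset.exists_max_image Finset.univ
      (fun p : ZMod m => (layer (f p) : ℕ)) ⟨0, Finset.mem_univ 0⟩
    simp only [Finset.mem_univ, forall_true_left] at hi hj
    by_cases hsp : (layer (f j) : ℕ) ≤ (layer (f i) : ℕ) + 1
    · -- everything in two consecutive layers
      have hmem : ∀ x ∈ Set.range f,
          (layer x : ℕ) = (layer (f i) : ℕ) ∨ (layer x : ℕ) = (layer (f i) : ℕ) + 1 := by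
        rintro x ⟨p, rfl⟩
        have h1 := hi p
        have h2 := hj p
        omega
      have hp2 := (hperf _ _ hmem).2
      rw [complInduce] at hp2
      exact hp2 ⟨m, hm5, hmodd, holeInduce f hinj hadj (fun p => ⟨p, rfl⟩)⟩
    · -- spread ≥ 2
      have hij : i ≠ j := by
        intro h
        rw [h] at hsp
        exact hsp (by omega)
      have hcons : j = i + 1 ∨ i = j + 1 := by
        by_contra hnc
        have h2 : ¬ Gᶜ.Adj (f i) (f j) := fun h => hnc ((hadj i j).mp h)
        rw [SimpleGraph.compl_adj] at h2
        push_neg at h2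
        have := hDiff _ _ (h2 (hfne i j hij))
        omega
      rcases hcons with h | h
      · exact main f hinj hadj i (by rw [← h]; omega)
      · have hrevadj : ∀ p q : ZMod m, Gᶜ.Adj (f (-p)) (f (-q)) ↔ (q = p + 1 ∨ p = q + 1) := by
          intro p q
          rw [hadj (-p) (-q)]
          constructor
          · rintro (h2 | h2)
            · right; linear_combination h2
            · left; linear_combination h2
          · rintro (h2 | h2)
            · right; linear_combination h2
            · left; linear_combination h2
        have e : -(-i + 1) = j := by rw [h]; ring
        refine main (fun t => f (-t)) (fun a b hab => neg_injective (hinj hab)) hrevadj (-i) ?_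
        simp only [neg_neg, e]
        omega
end

section
/- Let μ ≥ 1, let H be a graph, k = |V(H)| − μ ≥ 1, and let G be a graph on n vertices. Consider sequences σ = ⟨S_0, S_1, ..., S_ℓ⟩ of H-induced-subgraph-isomorphic sets of G with |S_{i−1} ∩ S_i| ≥ μ for each i. If some such sequence exists from S_s = S_0 to S_t = S_ℓ, then one exists with ℓ ≤ 2·C(n, μ) + 1. Consequently the decision problem 'are S_s and S_t reconfigurable under k-TJ' is in NP for fixed μ. -/
theorem stmt_18 {V W : Type*} [Fintype V] [DecidableEq V] [Fintype W]
    (G : SimpleGraph V) (H : SimpleGraph W) (μ k : ℕ) (hμ : 1 ≤ μ)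
    (hk : k = Fintype.card W - μ) (hk1 : 1 ≤ k)
    (Ss St : Finset V) (hSs : IsHSet G H Ss) (hSt : IsHSet G H St)
    (hreach : Relation.ReflTransGen (StepC G H μ) Ss St) :
    ∃ ℓ : ℕ, ℓ ≤ 2 * (Fintype.card V).choose μ + 1 ∧
      ∃ f : Fin (ℓ + 1) → Finset V, f 0 = Ss ∧ f (Fin.last ℓ) = St ∧
        ∀ i : Fin ℓ, StepC G H μ (f i.castSucc) (f i.succ) := by
  classical
  -- paths indexed by ℕ
  have hex : ∃ ℓ : ℕ, ∃ f : ℕ → Finset V, f 0 = Ss ∧ f ℓ = St ∧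
      ∀ i < ℓ, StepC G H μ (f i) (f (i + 1)) := by
    clear hSt
    induction hreach with
    | refl => exact ⟨0, fun _ => Ss, rfl, rfl, fun i h => absurd h (by omega)⟩
    | @tail b c hb hbc ih =>
      obtain ⟨ℓ, f, h0, hl, hstep⟩ := ih
      refine ⟨ℓ + 1, fun i => if i ≤ ℓ then f i else c, by simp [h0], by simp, ?_⟩
      intro i hi
      rcases lt_or_eq_of_le (Nat.lt_succ_iff.mp hi) with h | h
      · simp only [if_pos (le_of_lt h), if_pos (Nat.succ_le_of_lt h)]
        exact hstep i h
      · subst h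
        simp only [le_refl, if_pos, if_neg (by omega : ¬ i + 1 ≤ i)]
        rw [hl]; exact hbc
  set ℓ₀ := Nat.find hex with hℓ₀
  obtain ⟨f, h0, hl, hstep⟩ := Nat.find_spec hex
  have hH : ∀ i ≤ ℓ₀, IsHSet G H (f i) := by
    intro i hi
    match i with
    | 0 => rw [h0]; exact hSs
    | (j+1) => exact (hstep j (by omega)).2.1
  have hμW : μ < Fintype.card W := by omega
  have hcard : ∀ i ≤ ℓ₀, (f i).card = Fintype.card W := by
    intro i hi
    obtain ⟨e⟩ := hH i hi
    have := Fintype.card_congr e.toEquiv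
    simpa using this
  -- minimal path length is short
  have hbound : ℓ₀ ≤ 2 * (Fintype.card V).choose μ + 1 := by
    by_contra hcon
    push_neg at hcon
    -- choose a μ-subset of each set on the path
    have hg : ∀ i : ℕ, ∃ T : Finset V, i ≤ ℓ₀ → T ⊆ f i ∧ T.card = μ := by
      intro i
      by_cases hi : i ≤ ℓ₀
      · obtain ⟨T, hT1, hT2⟩ := Finset.exists_subset_card_eq
          (show μ ≤ (f i).card by rw [hcard i hi]; omega)
        exact ⟨T, fun _ => ⟨hT1, hT2⟩⟩
      · exact ⟨∅, fun h => absurd h hi⟩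
    choose g hgspec using hg
    have hmaps : ∀ i ∈ Finset.range (ℓ₀ + 1),
        g i ∈ Finset.powersetCard μ (Finset.univ : Finset V) := by
      intro i hi
      rw [Finset.mem_range] at hi
      rw [Finset.mem_powersetCard]
      exact ⟨Finset.subset_univ _, (hgspec i (by omega)).2⟩
    have hlt : (Finset.powersetCard μ (Finset.univ : Finset V)).card * 2 <
        (Finset.range (ℓ₀ + 1)).card := by
      rw [Finset.card_powersetCard, Finset.card_univ, Finset.card_range]
      omega
    obtain ⟨T, -, hfib⟩ :=
      Finset.exists_lt_card_fiber_of_mul_lt_card_of_maps_to hmaps hlt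
    set u := (Finset.range (ℓ₀ + 1)).filter (fun x => g x = T) with hu
    have hune : u.Nonempty := Finset.card_pos.mp (by omega)
    set a := u.min' hune with ha
    set c := u.max' hune with hc
    have hmem : ∀ x ∈ u, x ≤ ℓ₀ ∧ g x = T := by
      intro x hx
      rw [hu, Finset.mem_filter, Finset.mem_range] at hx
      exact ⟨by omega, hx.2⟩
    -- find a middle element
    have hmid : (u \ {a, c}).Nonempty := by
      rw [Finset.sdiff_nonempty]
      intro hsub
      have h1 := Finset.card_le_card hsub
      have h2 : ({a, c} : Finset ℕ).card ≤ 2 :=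
        (Finset.card_insert_le _ _).trans (by simp)
      omega
    obtain ⟨b, hb⟩ := hmid
    rw [Finset.mem_sdiff, Finset.mem_insert, Finset.mem_singleton] at hb
    push_neg at hb
    have hab : a < b := lt_of_le_of_ne (u.min'_le b hb.1) (Ne.symm hb.2.1)
    have hbc2 : b < c := lt_of_le_of_ne (u.le_max' b hb.1) hb.2.2
    have hau : a ∈ u := u.min'_mem hune
    have hcu : c ∈ u := u.max'_mem hune
    have haℓ := hmem a hau
    have hcℓ := hmem c hcu
    -- a + 2 ≤ c, both ≤ ℓ₀, T ⊆ f a, T ⊆ f c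
    have hTa : T ⊆ f a := haℓ.2 ▸ (hgspec a haℓ.1).1
    have hTc : T ⊆ f c := hcℓ.2 ▸ (hgspec c hcℓ.1).1
    have hTcard : (g a).card = μ := (hgspec a haℓ.1).2
    have hμT : μ ≤ (f a ∩ f c).card := by
      have h1 := Finset.card_le_card (Finset.subset_inter hTa hTc)
      have h2 : T.card = μ := by rw [← haℓ.2]; exact hTcard
      exact h2 ▸ h1
    have hstepac : StepC G H μ (f a) (f c) := ⟨hH a haℓ.1, hH c hcℓ.1, hμT⟩
    -- splice a shorter path
    set m := c - a - 1 with hm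
    have hm1 : 1 ≤ m := by omega
    have hmℓ : m < ℓ₀ := by omega
    set ℓ' := ℓ₀ - m with hℓ'
    have : ∃ f' : ℕ → Finset V, f' 0 = Ss ∧ f' ℓ' = St ∧
        ∀ i < ℓ', StepC G H μ (f' i) (f' (i + 1)) := by
      refine ⟨fun j => if j ≤ a then f j else f (j + m), ?_, ?_, ?_⟩
      · simp [h0]
      · dsimp only
        rw [if_neg (by omega : ¬ ℓ' ≤ a)]
        have : ℓ' + m = ℓ₀ := by omega
        rw [this, hl]
      · intro j hj
        dsimp only
        rcases lt_trichotomy j a with h | h | h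
        · rw [if_pos (le_of_lt h), if_pos (by omega : j + 1 ≤ a)]
          exact hstep j (by omega)
        · subst h
          rw [if_pos (le_refl _), if_neg (by omega : ¬ a + 1 ≤ a)]
          have : a + 1 + m = c := by omega
          rw [this]
          exact hstepac
        · rw [if_neg (by omega : ¬ j ≤ a), if_neg (by omega : ¬ j + 1 ≤ a)]
          have h2 : j + 1 + m = j + m + 1 := by omega
          rw [h2]
          exact hstep (j + m) (by omega)
    exact Nat.find_min hex (by omega : ℓ' < ℓ₀) this
  -- convert to Fin-indexed path
  refine ⟨ℓ₀, hbound, fun j => f j.val, by simp [h0], by simp [Fin.last, hℓ₀, hl], ?_⟩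
  intro i
  have := hstep i.val i.isLt
  simpa using this
end
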